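/- arXiv:1504.02799 — 7 statements merged into one kernel-verified Lean document; each statement's English description precedes it below -/
import Mathlib

section
/- In a precise all-pay bidding game, if the player with advantage has an equilibrium strategy S_A with (S_A)_i = 0, then any equilibrium strategy S_B of the opponent satisfies (S_B)_{i+1} = 0. -/
/-- A mixed strategy: a probability vector. -/
def IsProbVec {n : ℕ} (S : Fin n → ℝ) : Prop :=
  (∀ i, 0 ≤ S i) ∧ ∑ i, S i = 1

/-- Player A's expected payoff `S_Bᵀ M_A S_A`. -/
def payoff {m n : ℕ} (M : Matrix (Fin m) (Fin n) ℝ)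
    (SA : Fin n → ℝ) (SB : Fin m → ℝ) : ℝ :=
  ∑ i, SB i * (M.mulVec SA) i

/-- Nash equilibrium of the zero-sum game with payoff matrix `M` for player A
(A maximizes, B minimizes A's payoff). -/
def IsNash {m n : ℕ} (M : Matrix (Fin m) (Fin n) ℝ)
    (SA : Fin n → ℝ) (SB : Fin m → ℝ) : Prop :=
  IsProbVec SA ∧ IsProbVec SB ∧
    (∀ T, IsProbVec T → payoff M T SB ≤ payoff M SA SB) ∧
    (∀ T, IsProbVec T → payoff M SA SB ≤ payoff M SA T)

/-- Precision, expressed on the diagonal values `α` of the Toeplitz payoff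
matrix of the player with advantage: winning the bid by one fewer chip is
strictly better, and losing by one more chip is strictly better. -/
def Precise (α : ℤ → ℝ) : Prop :=
  (∀ i j : ℤ, 0 ≤ i → i < j → α j < α i) ∧
  (∀ i j : ℤ, i < j → j < 0 → α j < α i)


/-- in a precise all-pay bidding game (player A has advantage), if
an equilibrium strategy `S_A` of the advantaged player satisfies `(S_A)_i = 0`,
then any equilibrium strategy `S_B` of the opponent has `(S_B)_{i+1} = 0`. -/
theorem stmt_4 (a b : ℕ) (α : ℤ → ℝ) (hprec : Precise α)
    (M : Matrix (Fin (b + 1)) (Fin (a + 1)) ℝ)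
    (hM : ∀ (i : Fin (b + 1)) (j : Fin (a + 1)), M i j = α ((j : ℤ) - (i : ℤ)))
    (SA : Fin (a + 1) → ℝ) (SB : Fin (b + 1) → ℝ)
    (hNash : IsNash M SA SB) :
    ∀ (i : Fin (a + 1)) (hi : (i : ℕ) + 1 ≤ b),
      SA i = 0 → SB ⟨(i : ℕ) + 1, by omega⟩ = 0 := by
  intro i hi hSAi
  by_contra hne
  obtain ⟨⟨hSApos, hSAsum⟩, ⟨hSBpos, hSBsum⟩, _, hBopt⟩ := hNash
  set k0 : Fin (b + 1) := ⟨(i : ℕ), by omega⟩ with hk0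
  set k1 : Fin (b + 1) := ⟨(i : ℕ) + 1, by omega⟩ with hk1
  have hk01 : k0 ≠ k1 := by simp [hk0, hk1, Fin.ext_iff]
  have hSBk1 : 0 < SB k1 := lt_of_le_of_ne (hSBpos k1) (Ne.symm hne)
  -- the α step lemma
  have hαs : ∀ d : ℤ, d ≠ 0 → α d < α (d - 1) := by
    intro d hd
    rcases lt_or_gt_of_ne hd with h | h
    · exact hprec.2 (d - 1) d (by omega) (by omega)
    · exact hprec.1 (d - 1) d (by omega) (by omega)
  -- there is some j with SA j > 0, necessarily j ≠ i
  have hex : ∃ j, 0 < SA j := by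
    by_contra h
    push_neg at h
    have : ∑ j, SA j = 0 :=
      Finset.sum_eq_zero fun j _ => le_antisymm (h j) (hSApos j)
    rw [hSAsum] at this; norm_num at this
  obtain ⟨j₀, hj₀⟩ := hex
  have hj₀i : j₀ ≠ i := by
    intro h; rw [h, hSAi] at hj₀; exact lt_irrefl 0 hj₀
  -- key comparison of the two rows against SA
  have hg : M.mulVec SA k0 < M.mulVec SA k1 := by
    simp only [Matrix.mulVec, dotProduct]
    apply Finset.sum_lt_sum
    · intro j _
      by_cases hj : j = i
      · subst hj; simp [hSAi]
      · rw [hM, hM]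
        have hd : ((j : ℤ) - (k0 : ℤ)) ≠ 0 := by
          simp only [hk0]
          have : (j : ℕ) ≠ (i : ℕ) := fun h => hj (Fin.ext h)
          omega
        have : ((j : ℤ) - (k1 : ℤ)) = ((j : ℤ) - (k0 : ℤ)) - 1 := by
          simp only [hk0, hk1]; push_cast; ring
        rw [this]
        exact mul_le_mul_of_nonneg_right (le_of_lt (hαs _ hd)) (hSApos j)
    · refine ⟨j₀, Finset.mem_univ _, ?_⟩
      rw [hM, hM]
      have hd : ((j₀ : ℤ) - (k0 : ℤ)) ≠ 0 := by
        simp only [hk0]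
        have : (j₀ : ℕ) ≠ (i : ℕ) := fun h => hj₀i (Fin.ext h)
        omega
      have he : ((j₀ : ℤ) - (k1 : ℤ)) = ((j₀ : ℤ) - (k0 : ℤ)) - 1 := by
        simp only [hk0, hk1]; push_cast; ring
      rw [he]
      exact mul_lt_mul_of_pos_right (hαs _ hd) hj₀
  -- the deviation strategy for B
  set T : Fin (b + 1) → ℝ := fun k =>
    SB k + SB k1 * ((if k = k0 then (1 : ℝ) else 0) - (if k = k1 then 1 else 0)) with hT
  have hTprob : IsProbVec T := by
    constructor
    · intro k
      simp only [hT]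
      by_cases h0 : k = k0
      · subst h0
        simp [hk01, if_neg]
        have := hSBpos k0
        have := hSBpos k1
        linarith
      · by_cases h1 : k = k1
        · subst h1; simp [h0]
        · simp [h0, h1, hSBpos k]
    · simp only [hT]
      rw [Finset.sum_add_distrib]
      rw [hSBsum]
      have : ∑ k, SB k1 * ((if k = k0 then (1 : ℝ) else 0) - (if k = k1 then 1 else 0))
          = SB k1 * ((∑ k, if k = k0 then (1 : ℝ) else 0) - ∑ k, if k = k1 then (1 : ℝ) else 0) := by
        rw [← Finset.mul_sum, Finset.sum_sub_distrib]
      rw [this]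
      simp [Finset.sum_ite_eq']
  have hle := hBopt T hTprob
  have hpay : payoff M SA T
      = payoff M SA SB + SB k1 * (M.mulVec SA k0 - M.mulVec SA k1) := by
    simp only [payoff, hT, add_mul, sub_mul, ite_mul, one_mul, zero_mul, mul_sub, mul_ite,
      mul_zero]
    rw [Finset.sum_add_distrib, Finset.sum_sub_distrib, Finset.sum_ite_eq', Finset.sum_ite_eq']
    simp [mul_sub]
  rw [hpay] at hle
  nlinarith [hSBk1, hg]
end

section
/- In a precise all-pay bidding game, any equilibrium strategy for either player is gap-free: if (S)_i ≠ 0 and (S)_j ≠ 0 with i ≤ k ≤ j, then (S)_k ≠ 0. -/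
/-- A strategy is gap-free if its support is an interval of consecutive bids. -/
def GapFree {n : ℕ} (S : Fin n → ℝ) : Prop :=
  ∀ i j k : Fin n, i ≤ k → k ≤ j → S i ≠ 0 → S j ≠ 0 → S k ≠ 0

lemma dpos {α : ℤ → ℝ} (hprec : Precise α) (t : ℤ) (ht : t ≠ -1) :
    α (t + 1) < α t := by
  rcases lt_or_ge t 0 with h | h
  · exact hprec.2 t (t + 1) (by omega) (by omega)
  · exact hprec.1 t (t + 1) h (by omega)

lemma probSingle {n : ℕ} (k : Fin n) : IsProbVec (Pi.single k (1 : ℝ)) := by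
  constructor
  · intro i
    by_cases h : i = k <;> simp [Pi.single_apply, h]
  · simp [Finset.sum_pi_single']

/-- in a precise all-pay bidding game (A has advantage, so
`α₀ ≥ α₋₁`), any equilibrium strategy of either player is gap-free. -/
theorem stmt_5 (a b : ℕ) (α : ℤ → ℝ) (hprec : Precise α) (htie : α (-1) ≤ α 0)
    (M : Matrix (Fin (b + 1)) (Fin (a + 1)) ℝ)
    (hM : ∀ (i : Fin (b + 1)) (j : Fin (a + 1)), M i j = α ((j : ℤ) - (i : ℤ)))
    (SA : Fin (a + 1) → ℝ) (SB : Fin (b + 1) → ℝ)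
    (hNash : IsNash M SA SB) :
    GapFree SA ∧ GapFree SB := by
  obtain ⟨⟨hSA0, hSA1⟩, ⟨hSB0, hSB1⟩, hA, hB⟩ := hNash
  set v : ℝ := payoff M SA SB with hv
  set f : Fin (a + 1) → ℝ := fun j => ∑ i, SB i * M i j with hf
  set g : Fin (b + 1) → ℝ := fun i => ∑ j, M i j * SA j with hg
  -- payoff against SB, as a function of A's strategy
  have hpayf : ∀ T : Fin (a + 1) → ℝ, payoff M T SB = ∑ j, T j * f j := by
    intro T
    unfold payoff Matrix.mulVec dotProduct
    rw [show (∑ i, SB i * ∑ j, M i j * T j) = ∑ i, ∑ j, SB i * (M i j * T j) by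
      apply Finset.sum_congr rfl; intro i _; rw [Finset.mul_sum]]
    rw [Finset.sum_comm]
    apply Finset.sum_congr rfl
    intro j _
    rw [hf, Finset.mul_sum]
    apply Finset.sum_congr rfl
    intro i _
    ring
  -- payoff of SA, as a function of B's strategy
  have hpayg : ∀ T : Fin (b + 1) → ℝ, payoff M SA T = ∑ i, T i * g i := by
    intro T
    unfold payoff Matrix.mulVec dotProduct
    rfl
  have hfle : ∀ j, f j ≤ v := by
    intro j
    have h := hA (Pi.single j 1) (probSingle j)
    rwa [hpayf, Finset.sum_eq_single j
      (fun b _ hb => by simp [Pi.single_apply, hb])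
      (fun h => absurd (Finset.mem_univ j) h), Pi.single_eq_same, one_mul] at h
  have hgle : ∀ i, v ≤ g i := by
    intro i
    have h := hB (Pi.single i 1) (probSingle i)
    rwa [hpayg, Finset.sum_eq_single i
      (fun b _ hb => by simp [Pi.single_apply, hb])
      (fun h => absurd (Finset.mem_univ i) h), Pi.single_eq_same, one_mul] at h
  have hveqf : v = ∑ j, SA j * f j := hpayf SA
  have hveqg : v = ∑ i, SB i * g i := hpayg SB
  have hfsupp : ∀ j, SA j ≠ 0 → f j = v := by
    intro j hj
    have h0 : ∑ j, SA j * (v - f j) = 0 := by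
      have : ∑ j, SA j * (v - f j) = (∑ j, SA j) * v - ∑ j, SA j * f j := by
        rw [Finset.sum_mul, ← Finset.sum_sub_distrib]
        apply Finset.sum_congr rfl
        intro j _; ring
      rw [this, hSA1, one_mul, ← hveqf, sub_self]
    have hz := (Finset.sum_eq_zero_iff_of_nonneg
      (fun j _ => mul_nonneg (hSA0 j) (sub_nonneg.2 (hfle j)))).1 h0 j (Finset.mem_univ j)
    rcases mul_eq_zero.1 hz with h | h
    · exact absurd h hj
    · linarith [sub_eq_zero.1 h]
  have hgsupp : ∀ i, SB i ≠ 0 → g i = v := by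
    intro i hi
    have h0 : ∑ i, SB i * (g i - v) = 0 := by
      have : ∑ i, SB i * (g i - v) = (∑ i, SB i * g i) - (∑ i, SB i) * v := by
        rw [Finset.sum_mul, ← Finset.sum_sub_distrib]
        apply Finset.sum_congr rfl
        intro i _; ring
      rw [this, hSB1, one_mul, ← hveqg, sub_self]
    have hz := (Finset.sum_eq_zero_iff_of_nonneg
      (fun i _ => mul_nonneg (hSB0 i) (sub_nonneg.2 (hgle i)))).1 h0 i (Finset.mem_univ i)
    rcases mul_eq_zero.1 hz with h | h
    · exact absurd h hi
    · linarith [sub_eq_zero.1 h]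
  -- existence of support points
  have hexA : ∃ j, SA j ≠ 0 := by
    by_contra h
    push_neg at h
    rw [Finset.sum_eq_zero (fun j _ => h j)] at hSA1
    norm_num at hSA1
  have hexB : ∃ i, SB i ≠ 0 := by
    by_contra h
    push_neg at h
    rw [Finset.sum_eq_zero (fun i _ => h i)] at hSB1
    norm_num at hSB1
  -- f strictly decreases across a step whose upper end is not in supp SB
  have fdiff : ∀ j j' : Fin (a + 1), ((j' : ℕ) = (j : ℕ) + 1) →
      (∀ i : Fin (b + 1), (i : ℕ) = (j' : ℕ) → SB i = 0) → f j' < f j := by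
    intro j j' hjj' hzero
    have key : 0 < ∑ i, SB i * (M i j - M i j') := by
      have hMlt : ∀ i : Fin (b + 1), (i : ℕ) ≠ (j' : ℕ) → M i j' < M i j := by
        intro i hi
        rw [hM, hM]
        have ht : ((j : ℤ) - (i : ℤ)) ≠ -1 := by omega
        have := dpos hprec ((j : ℤ) - (i : ℤ)) ht
        have he : (j' : ℤ) - (i : ℤ) = (j : ℤ) - (i : ℤ) + 1 := by omega
        rw [he]; exact this
      apply Finset.sum_pos'
      · intro i _
        by_cases hi : (i : ℕ) = (j' : ℕ)
        · simp [hzero i hi]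
        · exact mul_nonneg (hSB0 i) (by linarith [hMlt i hi])
      · obtain ⟨i0, hi0⟩ := hexB
        refine ⟨i0, Finset.mem_univ _, ?_⟩
        have hi0' : (i0 : ℕ) ≠ (j' : ℕ) := fun h => hi0 (hzero i0 h)
        exact mul_pos ((hSB0 i0).lt_of_ne (Ne.symm hi0)) (by linarith [hMlt i0 hi0'])
    have hsum : ∑ i, SB i * (M i j - M i j') = f j - f j' := by
      simp only [hf]
      rw [← Finset.sum_sub_distrib]
      apply Finset.sum_congr rfl
      intro i _; ring
    linarith [hsum ▸ key]
  -- g strictly increases across a step whose lower end is not in supp SA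
  have gdiff : ∀ i i' : Fin (b + 1), ((i' : ℕ) = (i : ℕ) + 1) →
      (∀ j : Fin (a + 1), (j : ℕ) = (i : ℕ) → SA j = 0) → g i < g i' := by
    intro i i' hii' hzero
    have key : 0 < ∑ j, SA j * (M i' j - M i j) := by
      have hMlt : ∀ j : Fin (a + 1), (j : ℕ) ≠ (i : ℕ) → M i j < M i' j := by
        intro j hj
        rw [hM, hM]
        have ht : ((j : ℤ) - (i' : ℤ)) ≠ -1 := by omega
        have := dpos hprec ((j : ℤ) - (i' : ℤ)) ht
        have he : (j : ℤ) - (i : ℤ) = (j : ℤ) - (i' : ℤ) + 1 := by omega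
        rw [he]; exact this
      apply Finset.sum_pos'
      · intro j _
        by_cases hj : (j : ℕ) = (i : ℕ)
        · simp [hzero j hj]
        · exact mul_nonneg (hSA0 j) (by linarith [hMlt j hj])
      · obtain ⟨j0, hj0⟩ := hexA
        refine ⟨j0, Finset.mem_univ _, ?_⟩
        have hj0' : (j0 : ℕ) ≠ (i : ℕ) := fun h => hj0 (hzero j0 h)
        exact mul_pos ((hSA0 j0).lt_of_ne (Ne.symm hj0)) (by linarith [hMlt j0 hj0'])
    have hsum : ∑ j, SA j * (M i' j - M i j) = g i' - g i := by
      simp only [hg]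
      rw [← Finset.sum_sub_distrib]
      apply Finset.sum_congr rfl
      intro j _; ring
    linarith [hsum ▸ key]
  -- zeros of SA propagate upward
  have stepA : ∀ j j' : Fin (a + 1), ((j' : ℕ) = (j : ℕ) + 1) → SA j = 0 → SA j' = 0 := by
    intro j j' hjj' hjz
    have hSBz : ∀ i : Fin (b + 1), (i : ℕ) = (j' : ℕ) → SB i = 0 := by
      intro i hi
      by_contra hne
      have hgi : g i = v := hgsupp i hne
      have hjb : (j : ℕ) < b + 1 := by
        have := i.isLt
        omega
      set i0 : Fin (b + 1) := ⟨(j : ℕ), hjb⟩ with hi0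
      have hlt : g i0 < g i := by
        apply gdiff i0 i (by simp [hi0]; omega)
        intro j2 hj2
        have : j2 = j := Fin.ext (by simpa [hi0] using hj2)
        rwa [this]
      have := hgle i0
      linarith
    have hflt : f j' < f j := fdiff j j' hjj' hSBz
    by_contra hne
    have h1 := hfsupp j' hne
    have h2 := hfle j
    linarith
  -- zeros of SB (above a support point) propagate upward
  have stepB : ∀ i i' : Fin (b + 1), 1 ≤ (i : ℕ) → ((i' : ℕ) = (i : ℕ) + 1) →
      SB i = 0 → SB i' = 0 := by
    intro i i' hi1 hii' hiz
    have hSAz : ∀ j : Fin (a + 1), (j : ℕ) = (i : ℕ) → SA j = 0 := by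
      intro j hj
      have hj0a : (j : ℕ) - 1 < a + 1 := by
        have := j.isLt
        omega
      set j0 : Fin (a + 1) := ⟨(j : ℕ) - 1, hj0a⟩ with hj0
      have hflt : f j < f j0 := by
        apply fdiff j0 j (by simp [hj0]; omega)
        intro i2 hi2
        have : i2 = i := Fin.ext (by omega)
        rwa [this]
      by_contra hne
      have h1 := hfsupp j hne
      have h2 := hfle j0
      linarith
    by_contra hne
    have hgi' : g i' = v := hgsupp i' hne
    have hlt : g i < g i' := gdiff i i' hii' hSAz
    have := hgle i
    linarith
  constructor
  · -- GapFree SA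
    intro i j k hik hkj hi hj
    by_contra hk
    have key : ∀ t : ℕ, ∀ h : (k : ℕ) + t < a + 1, SA ⟨(k : ℕ) + t, h⟩ = 0 := by
      intro t
      induction t with
      | zero =>
        intro h
        have : (⟨(k : ℕ) + 0, h⟩ : Fin (a + 1)) = k := Fin.ext (by simp)
        rw [this]; exact hk
      | succ t ih =>
        intro h
        have h' : (k : ℕ) + t < a + 1 := by omega
        exact stepA ⟨(k : ℕ) + t, h'⟩ ⟨(k : ℕ) + (t + 1), h⟩ (by simp; omega) (ih h')
    have hkj' : (k : ℕ) ≤ (j : ℕ) := hkj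
    have hjlt : (k : ℕ) + ((j : ℕ) - (k : ℕ)) < a + 1 := by
      have := j.isLt; omega
    have := key ((j : ℕ) - (k : ℕ)) hjlt
    have heq : (⟨(k : ℕ) + ((j : ℕ) - (k : ℕ)), hjlt⟩ : Fin (a + 1)) = j :=
      Fin.ext (by simp; omega)
    rw [heq] at this
    exact hj this
  · -- GapFree SB
    intro i j k hik hkj hi hj
    by_contra hk
    have hik' : (i : ℕ) ≤ (k : ℕ) := hik
    have hne : i ≠ k := fun h => hi (h ▸ hk)
    have hk1 : 1 ≤ (k : ℕ) := by
      rcases Nat.lt_or_ge 0 (k : ℕ) with h | h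
      · omega
      · exfalso
        exact hne (Fin.ext (by omega))
    have key : ∀ t : ℕ, ∀ h : (k : ℕ) + t < b + 1, SB ⟨(k : ℕ) + t, h⟩ = 0 := by
      intro t
      induction t with
      | zero =>
        intro h
        have : (⟨(k : ℕ) + 0, h⟩ : Fin (b + 1)) = k := Fin.ext (by simp)
        rw [this]; exact hk
      | succ t ih =>
        intro h
        have h' : (k : ℕ) + t < b + 1 := by omega
        exact stepB ⟨(k : ℕ) + t, h'⟩ ⟨(k : ℕ) + (t + 1), h⟩ (by simp; omega)
          (by simp; omega) (ih h')
    have hkj' : (k : ℕ) ≤ (j : ℕ) := hkj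
    have hjlt : (k : ℕ) + ((j : ℕ) - (k : ℕ)) < b + 1 := by
      have := j.isLt; omega
    have := key ((j : ℕ) - (k : ℕ)) hjlt
    have heq : (⟨(k : ℕ) + ((j : ℕ) - (k : ℕ)), hjlt⟩ : Fin (b + 1)) = j :=
      Fin.ext (by simp; omega)
    rw [heq] at this
    exact hj this
end

section
/- In a precise all-pay bidding game, the player with advantage has a unique Nash equilibrium strategy. -/
open Finset

namespace Stmt7


lemma sum_ext {n : ℕ} (X : Fin n → ℝ) (W : ℕ → ℝ) :
    ∑ j ∈ range n, (if h : j < n then X ⟨j, h⟩ else 0) * W j = ∑ j : Fin n, X j * W (j : ℕ) := by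
  rw [← Fin.sum_univ_eq_sum_range (fun j => (if h : j < n then X ⟨j, h⟩ else 0) * W j) n]
  apply Finset.sum_congr rfl
  intro j _
  rw [dif_pos j.isLt]

lemma sum_ext0 {n : ℕ} (X : Fin n → ℝ) :
    ∑ j ∈ range n, (if h : j < n then X ⟨j, h⟩ else 0) = ∑ j : Fin n, X j := by
  rw [← Fin.sum_univ_eq_sum_range (fun j => (if h : j < n then X ⟨j, h⟩ else 0)) n]
  apply Finset.sum_congr rfl
  intro j _
  rw [dif_pos j.isLt]

structure Ctx where
  a : ℕ
  b : ℕ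
  al : ℤ → ℝ
  v : ℝ
  s : ℕ → ℝ
  t : ℕ → ℝ
  hal1 : ∀ i j : ℤ, 0 ≤ i → i < j → al j < al i
  hal2 : ∀ i j : ℤ, i < j → j < 0 → al j < al i
  hs0 : ∀ j, 0 ≤ s j
  hs_out : ∀ j, a < j → s j = 0
  hs1 : ∑ j ∈ range (a+1), s j = 1
  ht0 : ∀ i, 0 ≤ t i
  ht_out : ∀ i, b < i → t i = 0
  ht1 : ∑ i ∈ range (b+1), t i = 1
  hf : ∀ i, i ≤ b → v ≤ ∑ j ∈ range (a+1), s j * al ((j : ℤ) - (i : ℤ))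
  hg : ∀ j, j ≤ a → ∑ i ∈ range (b+1), t i * al ((j : ℤ) - (i : ℤ)) ≤ v

lemma cast_ne {x y : ℕ} (h : x ≠ y) : (x:ℤ) - (y:ℤ) ≠ 0 := by omega

namespace Ctx

variable (c : Ctx)

/-- `beta k = al (k-1) - al k`, positive for `k ≠ 0`. -/
def beta (k : ℤ) : ℝ := c.al (k - 1) - c.al k

/-- row value of weights `w` on columns against pure row `i` -/
def rowF (w : ℕ → ℝ) (i : ℕ) : ℝ := ∑ j ∈ range (c.a+1), w j * c.al ((j:ℤ) - (i:ℤ))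
/-- column value of weights `w` on rows against pure column `j` -/
def colF (w : ℕ → ℝ) (j : ℕ) : ℝ := ∑ i ∈ range (c.b+1), w i * c.al ((j:ℤ) - (i:ℤ))
def rowB (w : ℕ → ℝ) (i : ℕ) : ℝ := ∑ j ∈ range (c.a+1), w j * c.beta ((j:ℤ) - (i:ℤ))
def colB (w : ℕ → ℝ) (j : ℕ) : ℝ := ∑ i ∈ range (c.b+1), w i * c.beta ((j:ℤ) - (i:ℤ))

def f (i : ℕ) : ℝ := c.rowF c.s i
def g (j : ℕ) : ℝ := c.colF c.t j

lemma beta_pos {k : ℤ} (hk : k ≠ 0) : 0 < c.beta k := by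
  rcases lt_or_gt_of_ne hk with h | h
  · exact sub_pos.2 (c.hal2 (k-1) k (by omega) h)
  · exact sub_pos.2 (c.hal1 (k-1) k (by omega) (by omega))

lemma row_succ (w : ℕ → ℝ) (i : ℕ) : c.rowF w (i+1) = c.rowF w i + c.rowB w i := by
  unfold rowF rowB
  rw [← Finset.sum_add_distrib]
  apply Finset.sum_congr rfl
  intro j _
  have h1 : (j:ℤ) - ((i:ℕ)+1:ℕ) = ((j:ℤ) - (i:ℤ)) - 1 := by push_cast; ring
  rw [h1]
  unfold beta
  ring

lemma col_succ (w : ℕ → ℝ) (j : ℕ) : c.colF w (j+1) = c.colF w j - c.colB w (j+1) := by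
  unfold colF colB
  rw [← Finset.sum_sub_distrib]
  apply Finset.sum_congr rfl
  intro i _
  have h1 : ((j:ℕ)+1:ℕ) - (i:ℤ) = ((j:ℤ) - (i:ℤ)) + 1 := by push_cast; ring
  rw [h1]
  unfold beta
  have h2 : ((j:ℤ) - (i:ℤ)) + 1 - 1 = (j:ℤ) - (i:ℤ) := by ring
  rw [h2]
  ring

lemma ex_s : ∃ j, j ≤ c.a ∧ 0 < c.s j := by
  by_contra h
  push_neg at h
  have : ∑ j ∈ range (c.a+1), c.s j = 0 := by
    apply Finset.sum_eq_zero
    intro j hj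
    have hj' : j ≤ c.a := by simpa using Nat.lt_succ_iff.mp (Finset.mem_range.mp hj)
    exact le_antisymm (h j hj') (c.hs0 j)
  rw [c.hs1] at this; norm_num at this

lemma ex_t : ∃ i, i ≤ c.b ∧ 0 < c.t i := by
  by_contra h
  push_neg at h
  have : ∑ i ∈ range (c.b+1), c.t i = 0 := by
    apply Finset.sum_eq_zero
    intro i hi
    have hi' : i ≤ c.b := Nat.lt_succ_iff.mp (Finset.mem_range.mp hi)
    exact le_antisymm (h i hi') (c.ht0 i)
  rw [c.ht1] at this; norm_num at this

lemma fub : ∑ i ∈ range (c.b+1), c.t i * c.f i = ∑ j ∈ range (c.a+1), c.s j * c.g j := by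
  have step1 : ∑ i ∈ range (c.b+1), c.t i * c.f i
      = ∑ i ∈ range (c.b+1), ∑ j ∈ range (c.a+1), c.t i * (c.s j * c.al ((j:ℤ)-(i:ℤ))) := by
    apply Finset.sum_congr rfl
    intro i _
    unfold f rowF
    rw [Finset.mul_sum]
  rw [step1, Finset.sum_comm]
  apply Finset.sum_congr rfl
  intro j _
  unfold g colF
  rw [Finset.mul_sum]
  apply Finset.sum_congr rfl
  intro i _
  ring

lemma pay_v : ∑ i ∈ range (c.b+1), c.t i * c.f i = c.v := by
  have hPge : c.v ≤ ∑ i ∈ range (c.b+1), c.t i * c.f i := by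
    have h1 : ∑ i ∈ range (c.b+1), c.t i * c.v ≤ ∑ i ∈ range (c.b+1), c.t i * c.f i := by
      apply Finset.sum_le_sum
      intro i hi
      exact mul_le_mul_of_nonneg_left (c.hf i (Nat.lt_succ_iff.mp (Finset.mem_range.mp hi))) (c.ht0 _)
    rwa [← Finset.sum_mul, c.ht1, one_mul] at h1
  have hPle : ∑ i ∈ range (c.b+1), c.t i * c.f i ≤ c.v := by
    rw [c.fub]
    have h1 : ∑ j ∈ range (c.a+1), c.s j * c.g j ≤ ∑ j ∈ range (c.a+1), c.s j * c.v := by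
      apply Finset.sum_le_sum
      intro j hj
      exact mul_le_mul_of_nonneg_left (c.hg j (Nat.lt_succ_iff.mp (Finset.mem_range.mp hj))) (c.hs0 _)
    rwa [← Finset.sum_mul, c.hs1, one_mul] at h1
  exact le_antisymm hPle hPge

lemma hslack_t : ∀ i, 0 < c.t i → c.f i = c.v := by
  intro i hi
  have hib : i ≤ c.b := by
    by_contra h
    rw [c.ht_out i (by omega)] at hi
    exact lt_irrefl _ hi
  have hz : ∑ i' ∈ range (c.b+1), c.t i' * (c.f i' - c.v) = 0 := by
    have he : ∑ i' ∈ range (c.b+1), c.t i' * (c.f i' - c.v)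
        = (∑ i' ∈ range (c.b+1), c.t i' * c.f i') - (∑ i' ∈ range (c.b+1), c.t i') * c.v := by
      rw [Finset.sum_mul, ← Finset.sum_sub_distrib]
      apply Finset.sum_congr rfl
      intro i' _
      ring
    rw [he, c.pay_v, c.ht1, one_mul]
    ring
  have hterms := (Finset.sum_eq_zero_iff_of_nonneg (fun i' hi' =>
    mul_nonneg (c.ht0 _) (sub_nonneg.mpr (c.hf i' (Nat.lt_succ_iff.mp (Finset.mem_range.mp hi')))))).mp hz
  have h := hterms i (Finset.mem_range.mpr (by omega))
  rcases mul_eq_zero.mp h with h' | h'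
  · exact absurd h' (ne_of_gt hi)
  · exact sub_eq_zero.mp h' 

lemma hslack_s : ∀ j, 0 < c.s j → c.g j = c.v := by
  intro j hj
  have hja : j ≤ c.a := by
    by_contra h
    rw [c.hs_out j (by omega)] at hj
    exact lt_irrefl _ hj
  have hz : ∑ j' ∈ range (c.a+1), c.s j' * (c.v - c.g j') = 0 := by
    have he : ∑ j' ∈ range (c.a+1), c.s j' * (c.v - c.g j')
        = (∑ j' ∈ range (c.a+1), c.s j') * c.v - ∑ j' ∈ range (c.a+1), c.s j' * c.g j' := by
      rw [Finset.sum_mul, ← Finset.sum_sub_distrib]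
      apply Finset.sum_congr rfl
      intro j' _
      ring
    rw [he, ← c.fub, c.pay_v, c.hs1, one_mul]
    ring
  have hterms := (Finset.sum_eq_zero_iff_of_nonneg (fun j' hj' =>
    mul_nonneg (c.hs0 _) (sub_nonneg.mpr (c.hg j' (Nat.lt_succ_iff.mp (Finset.mem_range.mp hj')))))).mp hz
  have h := hterms j (Finset.mem_range.mpr (by omega))
  rcases mul_eq_zero.mp h with h' | h'
  · exact absurd h' (ne_of_gt hj)
  · exact (sub_eq_zero.mp h').symm

open scoped Classical in
noncomputable def m : ℕ := Nat.findGreatest (fun j => 0 < c.s j) c.a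
open scoped Classical in
noncomputable def mT : ℕ := Nat.findGreatest (fun i => 0 < c.t i) c.b

lemma s_m_pos : 0 < c.s c.m := by
  obtain ⟨j, hj, hjs⟩ := c.ex_s
  unfold m
  classical
  exact Nat.findGreatest_spec (P := fun j => 0 < c.s j) hj hjs

lemma m_le_a : c.m ≤ c.a := by
  unfold m; exact Nat.findGreatest_le _

lemma s_zero_of_gt {j : ℕ} (h : c.m < j) : c.s j = 0 := by
  by_cases hja : j ≤ c.a
  · unfold m at h
    have := Nat.findGreatest_is_greatest (P := fun j => 0 < c.s j) h hja
    exact le_antisymm (not_lt.mp this) (c.hs0 j)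
  · exact c.hs_out j (not_le.mp hja)

lemma supp_s_le {j : ℕ} (h : 0 < c.s j) : j ≤ c.m := by
  by_contra hc
  rw [c.s_zero_of_gt (not_le.mp hc)] at h
  exact lt_irrefl _ h

lemma t_mT_pos : 0 < c.t c.mT := by
  obtain ⟨i, hi, hit⟩ := c.ex_t
  unfold mT
  classical
  exact Nat.findGreatest_spec (P := fun i => 0 < c.t i) hi hit

lemma mT_le_b : c.mT ≤ c.b := by
  unfold mT; exact Nat.findGreatest_le _

lemma t_zero_of_gt {i : ℕ} (h : c.mT < i) : c.t i = 0 := by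
  by_cases hib : i ≤ c.b
  · unfold mT at h
    have := Nat.findGreatest_is_greatest (P := fun i => 0 < c.t i) h hib
    exact le_antisymm (not_lt.mp this) (c.ht0 i)
  · exact c.ht_out i (not_le.mp hib)

lemma supp_t_le' {i : ℕ} (h : 0 < c.t i) : i ≤ c.mT := by
  by_contra hc
  rw [c.t_zero_of_gt (not_le.mp hc)] at h
  exact lt_irrefl _ h



lemma rowB_pos {i : ℕ} (h : c.m + 1 ≤ i) : 0 < c.rowB c.s i := by
  unfold rowB
  apply Finset.sum_pos'
  · intro j _
    rcases eq_or_lt_of_le (c.hs0 j) with h0 | h0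
    · rw [← h0]; simp
    · have hjm : j ≤ c.m := c.supp_s_le h0
      have : (j:ℤ) - (i:ℤ) ≠ 0 := cast_ne (by omega)
      exact le_of_lt (mul_pos h0 (c.beta_pos this))
  · refine ⟨c.m, Finset.mem_range.mpr (by have := c.m_le_a; omega), ?_⟩
    have : ((c.m):ℤ) - (i:ℤ) ≠ 0 := cast_ne (by omega)
    exact mul_pos c.s_m_pos (c.beta_pos this)

lemma colB_nonneg_of_zero {j : ℕ} (hj : c.t j = 0) : 0 ≤ c.colB c.t j := by
  unfold colB
  apply Finset.sum_nonneg
  intro i _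
  by_cases hij : i = j
  · rw [hij, hj]; simp
  · exact mul_nonneg (c.ht0 i) (le_of_lt (c.beta_pos (cast_ne (by omega))))

lemma colB_pos_of_gt {j : ℕ} (h : c.mT < j) : 0 < c.colB c.t j := by
  unfold colB
  apply Finset.sum_pos'
  · intro i _
    rcases eq_or_lt_of_le (c.ht0 i) with h0 | h0
    · rw [← h0]; simp
    · have him : i ≤ c.mT := c.supp_t_le' h0
      exact le_of_lt (mul_pos h0 (c.beta_pos (cast_ne (by omega))))
  · refine ⟨c.mT, Finset.mem_range.mpr (by have := c.mT_le_b; omega), ?_⟩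
    exact mul_pos c.t_mT_pos (c.beta_pos (cast_ne (by omega)))

lemma f_succ (i : ℕ) : c.f (i+1) = c.f i + c.rowB c.s i := c.row_succ c.s i
lemma g_succ (j : ℕ) : c.g (j+1) = c.g j - c.colB c.t (j+1) := c.col_succ c.t j

lemma f_gt_of_ge : ∀ i, c.m + 2 ≤ i → i ≤ c.b → c.v < c.f i := by
  intro i
  induction i with
  | zero => omega
  | succ i ih =>
    intro h2 hb
    rcases Nat.lt_or_ge i (c.m+2) with hlt | hge
    · have hi : i = c.m + 1 := by omega
      rw [c.f_succ i, hi]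
      have h1 : c.v ≤ c.f (c.m+1) := c.hf (c.m+1) (by omega)
      have h2 := c.rowB_pos (i := c.m+1) (le_refl _)
      linarith
    · have h1 := ih hge (by omega)
      rw [c.f_succ i]
      have h2 := c.rowB_pos (i := i) (by omega)
      linarith

lemma supp_t_le_m1 {i : ℕ} (h : 0 < c.t i) : i ≤ c.m + 1 := by
  by_contra hc
  have hib : i ≤ c.b := c.supp_t_le' h |>.trans c.mT_le_b
  have h1 := c.f_gt_of_ge i (by omega) hib
  have h2 := c.hslack_t i h
  rw [h2] at h1
  exact lt_irrefl _ h1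

lemma mT_le_m1 : c.mT ≤ c.m + 1 := c.supp_t_le_m1 c.t_mT_pos

lemma m_le_mT : c.m ≤ c.mT := by
  by_contra hc
  push_neg at hc
  have key : ∀ n, c.mT + 1 + n ≤ c.m → c.g (c.mT + 1 + n) < c.v := by
    intro n
    induction n with
    | zero =>
      intro hn
      have h1 : c.g c.mT ≤ c.v := c.hg c.mT (by have := c.m_le_a; omega)
      have h2 := c.colB_pos_of_gt (j := c.mT + 1) (by omega)
      have h3 := c.g_succ c.mT
      simp only [Nat.add_zero]
      linarith
    | succ n ih =>
      intro hn
      have h1 := ih (by omega)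
      have h2 := c.colB_pos_of_gt (j := c.mT + 1 + n + 1) (by omega)
      have h3 := c.g_succ (c.mT + 1 + n)
      have he : c.mT + 1 + (n+1) = c.mT + 1 + n + 1 := by omega
      rw [he]
      linarith
  have h4 := key (c.m - (c.mT+1)) (by omega)
  have he : c.mT + 1 + (c.m - (c.mT+1)) = c.m := by omega
  rw [he] at h4
  have h5 := c.hslack_s c.m c.s_m_pos
  rw [h5] at h4
  exact lt_irrefl _ h4


lemma rowB_nonneg_of_zero {k : ℕ} (hk : c.s k = 0) : 0 ≤ c.rowB c.s k := by
  unfold rowB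
  apply Finset.sum_nonneg
  intro j _
  by_cases hjk : j = k
  · rw [hjk, hk]; simp
  · exact mul_nonneg (c.hs0 j) (le_of_lt (c.beta_pos (cast_ne (by omega))))

lemma beta0_neg {j1 j2 : ℕ} (h12 : j1 < j2) (h1 : 0 < c.s j1) (h2 : 0 < c.s j2) :
    c.beta 0 < 0 := by
  by_contra hb
  push_neg at hb
  have hball : ∀ k : ℤ, 0 ≤ c.beta k := by
    intro k
    by_cases hk : k = 0
    · rw [hk]; exact hb
    · exact le_of_lt (c.beta_pos hk)
  have hcolBnn : ∀ j, 0 ≤ c.colB c.t j := by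
    intro j
    exact Finset.sum_nonneg fun i _ => mul_nonneg (c.ht0 i) (hball _)
  have hstep : ∀ p, c.g (p+1) ≤ c.g p := by
    intro p
    have h := c.g_succ p
    have h2 := hcolBnn (p+1)
    linarith
  have hgmono : ∀ p n, c.g (p+n) ≤ c.g p := by
    intro p n
    induction n with
    | zero => simp
    | succ n ih =>
      have := hstep (p+n)
      have he : p + (n+1) = (p + n) + 1 := by omega
      rw [he]
      linarith
  have hmono' : ∀ p q, p ≤ q → c.g q ≤ c.g p := by
    intro p q hpq
    have := hgmono p (q - p)
    rwa [Nat.add_sub_cancel' hpq] at this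
  have hg1 : c.g j1 = c.v := c.hslack_s j1 h1
  have hg2 : c.g j2 = c.v := c.hslack_s j2 h2
  have hgj1 : c.g (j1+1) = c.v := by
    have ha := hmono' j1 (j1+1) (by omega)
    have hb' := hmono' (j1+1) j2 (by omega)
    linarith
  have hcB1 : c.colB c.t (j1+1) = 0 := by
    have := c.g_succ j1
    linarith
  have hterm1 := (Finset.sum_eq_zero_iff_of_nonneg
    (fun i _ => mul_nonneg (c.ht0 i) (hball _))).mp hcB1
  obtain ⟨istar, hib, hit⟩ := c.ex_t
  have hii : istar = j1 + 1 := by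
    by_contra hne
    have hbpos := c.beta_pos (cast_ne (x := j1+1) (y := istar) (by omega))
    have := hterm1 istar (Finset.mem_range.mpr (by omega))
    nlinarith
  by_cases hcase : j1 + 2 ≤ j2
  · have hgj12 : c.g (j1+2) = c.v := by
      have ha := hmono' (j1+1) (j1+2) (by omega)
      have hb' := hmono' (j1+2) j2 (by omega)
      linarith
    have hcB2 : c.colB c.t (j1+2) = 0 := by
      have := c.g_succ (j1+1)
      have he : j1 + 1 + 1 = j1 + 2 := by omega
      rw [he] at this
      linarith
    have hterm2 := (Finset.sum_eq_zero_iff_of_nonneg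
      (fun i _ => mul_nonneg (c.ht0 i) (hball _))).mp hcB2
    have hbpos := c.beta_pos (show ((j1+2:ℕ):ℤ) - ((istar:ℕ):ℤ) ≠ 0 from cast_ne (by omega))
    have := hterm2 istar (Finset.mem_range.mpr (by omega))
    nlinarith
  · have hj2 : j2 = j1 + 1 := by omega
    have hfj2 : c.f j2 = c.v := by
      have : 0 < c.t j2 := by rw [hj2, ← hii]; exact hit
      exact c.hslack_t j2 this
    have hfj1 : c.v ≤ c.f j1 := c.hf j1 (by omega)
    have hj2a : j2 ≤ c.a := le_trans (c.supp_s_le h2) c.m_le_a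
    have hrB : 0 < c.rowB c.s j1 := by
      unfold rowB
      apply Finset.sum_pos'
      · intro j _
        exact mul_nonneg (c.hs0 j) (hball _)
      · refine ⟨j2, Finset.mem_range.mpr (by omega), ?_⟩
        exact mul_pos h2 (c.beta_pos (cast_ne (by omega)))
    have hfs := c.f_succ j1
    rw [hj2.symm] at hfs
    linarith

lemma tight_step (hb0 : c.beta 0 < 0) {k : ℕ} (hk1 : 1 ≤ k) (hkb : k + 1 ≤ c.b)
    (h1 : c.f (k+1) = c.v) : c.f k = c.v := by
  by_contra hne
  have hfk : c.v < c.f k := lt_of_le_of_ne (c.hf k (by omega)) (Ne.symm hne)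
  have hsB : c.rowB c.s k < 0 := by
    have := c.f_succ k
    linarith
  have hsk : 0 < c.s k := by
    rcases eq_or_lt_of_le (c.hs0 k) with h0 | h0
    · exact absurd hsB (not_lt.mpr (c.rowB_nonneg_of_zero h0.symm))
    · exact h0
  have hka : k ≤ c.a := le_trans (c.supp_s_le hsk) c.m_le_a
  have hgk : c.g k = c.v := c.hslack_s k hsk
  have htk : c.t k = 0 := by
    by_contra h
    have hpos : 0 < c.t k := lt_of_le_of_ne (c.ht0 k) (Ne.symm h)
    exact hne (c.hslack_t k hpos)
  obtain ⟨k', rfl⟩ : ∃ k', k = k'+1 := ⟨k-1, by omega⟩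
  have hcBk : 0 ≤ c.colB c.t (k'+1) := c.colB_nonneg_of_zero htk
  have hgk' : c.g k' ≤ c.v := c.hg k' (by omega)
  have hgs := c.g_succ k'
  have hcB0 : c.colB c.t (k'+1) = 0 := by linarith
  have hnn : ∀ i ∈ range (c.b+1), 0 ≤ c.t i * c.beta (((k'+1:ℕ):ℤ) - (i:ℤ)) := by
    intro i _
    by_cases hik : i = k'+1
    · rw [hik, htk]; simp
    · exact mul_nonneg (c.ht0 i) (le_of_lt (c.beta_pos (cast_ne (by omega))))
  have hterm := (Finset.sum_eq_zero_iff_of_nonneg hnn).mp hcB0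
  have htall : ∀ i ∈ range (c.b+1), c.t i = 0 := by
    intro i hi
    by_cases hik : i = k'+1
    · rw [hik]; exact htk
    · have h := hterm i hi
      have hbpos := c.beta_pos (cast_ne (x := k'+1) (y := i) (by omega))
      rcases mul_eq_zero.mp h with h' | h'
      · exact h'
      · exact absurd h' (ne_of_gt hbpos)
  have : (1:ℝ) = 0 := by rw [← c.ht1]; exact Finset.sum_eq_zero htall
  norm_num at this

lemma tight_down (hb0 : c.beta 0 < 0) :
    ∀ n i, 1 ≤ i → i + n ≤ c.b → c.f (i+n) = c.v → c.f i = c.v := by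
  intro n
  induction n with
  | zero => intro i _ _ h; simpa using h
  | succ n ih =>
    intro i hi1 hib hf1
    apply ih i hi1 (by omega)
    apply c.tight_step hb0 (by omega) (by omega)
    have he : i + n + 1 = i + (n+1) := by omega
    rw [he]
    exact hf1


lemma zero_slack (hb0 : c.beta 0 < 0) (h0 : c.f 0 ≠ c.v) :
    c.m + 1 ≤ c.b ∧ c.f (c.m+1) = c.v := by
  have hf0 : c.v < c.f 0 := lt_of_le_of_ne (c.hf 0 (Nat.zero_le _)) (Ne.symm h0)
  have ht00 : c.t 0 = 0 := by
    by_contra h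
    exact h0 (c.hslack_t 0 (lt_of_le_of_ne (c.ht0 0) (Ne.symm h)))
  have hmT1 : 1 ≤ c.mT := by
    rcases Nat.eq_zero_or_pos c.mT with h | h
    · have := c.t_mT_pos
      rw [h, ht00] at this
      exact absurd this (lt_irrefl 0)
    · exact h
  have hfmT : c.f c.mT = c.v := c.hslack_t c.mT c.t_mT_pos
  by_cases hmTa : c.mT ≤ c.a
  · exfalso
    -- the down-shifted strategy argument
    have hshift : ∀ j : ℕ, (∑ i ∈ range (c.b+1), c.t (i+1) * c.al ((j:ℤ) - (i:ℤ))) = c.g (j+1) := by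
      intro j
      have e1 := Finset.sum_range_succ' (fun i => c.t i * c.al ((j:ℤ) + 1 - (i:ℤ))) (c.b+1)
      have e2 := Finset.sum_range_succ (fun i => c.t i * c.al ((j:ℤ) + 1 - (i:ℤ))) (c.b+1)
      have hgj : c.g (j+1) = ∑ i ∈ range (c.b+1), c.t i * c.al ((j:ℤ) + 1 - (i:ℤ)) := by
        unfold g colF
        apply Finset.sum_congr rfl
        intro i _
        norm_cast
      have hlhs : (∑ i ∈ range (c.b+1), c.t (i+1) * c.al ((j:ℤ) - (i:ℤ)))
          = ∑ i ∈ range (c.b+1), c.t (i+1) * c.al ((j:ℤ) + 1 - ((i:ℤ)+1)) := by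
        apply Finset.sum_congr rfl
        intro i _
        congr 1
        ring
      have htb1 : c.t (c.b+1) = 0 := c.ht_out _ (by omega)
      push_cast at e1 e2
      rw [hlhs, hgj]
      rw [ht00] at e1
      rw [htb1] at e2
      simp only [zero_mul, add_zero] at e1 e2
      linarith [e1, e2]
    have hga1 : c.g (c.a+1) ≤ c.v := by
      have h1 : c.g (c.a+1) ≤ c.g c.a := by
        unfold g colF
        apply Finset.sum_le_sum
        intro i _
        rcases eq_or_lt_of_le (c.ht0 i) with h0' | h0'
        · rw [← h0']; simp
        · have hia : i ≤ c.a := le_trans (c.supp_t_le' h0') hmTa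
          have := c.hal1 ((c.a:ℤ) - i) (((c.a+1:ℕ):ℤ) - i) (by omega) (by push_cast; omega)
          exact le_of_lt (by nlinarith)
      exact le_trans h1 (c.hg c.a (le_refl _))
    have hgle : ∀ j, j ≤ c.a → c.g (j+1) ≤ c.v := by
      intro j hj
      rcases eq_or_lt_of_le hj with h | h
      · rw [h]; exact hga1
      · exact c.hg (j+1) (by omega)
    -- P computed two ways
    have hsum' : ∑ i ∈ range (c.b+1), c.t (i+1) = 1 := by
      have e1 := Finset.sum_range_succ' c.t (c.b+1)
      have e2 := Finset.sum_range_succ c.t (c.b+1)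
      have htb1 : c.t (c.b+1) = 0 := c.ht_out _ (by omega)
      rw [htb1] at e2
      rw [ht00] at e1
      have : ∑ i ∈ range (c.b+1+1), c.t i = 1 := by rw [e2, c.ht1]; ring
      rw [this] at e1
      linarith
    have hfub : (∑ i ∈ range (c.b+1), c.t (i+1) * c.f i)
        = ∑ j ∈ range (c.a+1), c.s j * c.g (j+1) := by
      have step1 : (∑ i ∈ range (c.b+1), c.t (i+1) * c.f i)
          = ∑ i ∈ range (c.b+1), ∑ j ∈ range (c.a+1), c.t (i+1) * (c.s j * c.al ((j:ℤ)-(i:ℤ))) := by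
        apply Finset.sum_congr rfl
        intro i _
        unfold f rowF
        rw [Finset.mul_sum]
      rw [step1, Finset.sum_comm]
      apply Finset.sum_congr rfl
      intro j _
      rw [← hshift j, Finset.mul_sum]
      apply Finset.sum_congr rfl
      intro i _
      ring
    set P := ∑ i ∈ range (c.b+1), c.t (i+1) * c.f i with hP
    have hPge : c.v ≤ P := by
      have h1 : ∑ i ∈ range (c.b+1), c.t (i+1) * c.v ≤ P := by
        apply Finset.sum_le_sum
        intro i hi
        exact mul_le_mul_of_nonneg_left (c.hf i (Nat.lt_succ_iff.mp (Finset.mem_range.mp hi))) (c.ht0 _)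
      rwa [← Finset.sum_mul, hsum', one_mul] at h1
    have hPle : P ≤ c.v := by
      rw [hfub]
      have h1 : ∑ j ∈ range (c.a+1), c.s j * c.g (j+1) ≤ ∑ j ∈ range (c.a+1), c.s j * c.v := by
        apply Finset.sum_le_sum
        intro j hj
        exact mul_le_mul_of_nonneg_left (hgle j (Nat.lt_succ_iff.mp (Finset.mem_range.mp hj))) (c.hs0 _)
      rwa [← Finset.sum_mul, c.hs1, one_mul] at h1
    have hPv : P = c.v := le_antisymm hPle hPge
    have rows0 : ∀ i ∈ range (c.b+1), c.t (i+1) * (c.f i - c.v) = 0 := by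
      have hsumz : ∑ i ∈ range (c.b+1), c.t (i+1) * (c.f i - c.v) = 0 := by
        have : ∑ i ∈ range (c.b+1), c.t (i+1) * (c.f i - c.v)
            = P - (∑ i ∈ range (c.b+1), c.t (i+1)) * c.v := by
          rw [hP, Finset.sum_mul, ← Finset.sum_sub_distrib]
          apply Finset.sum_congr rfl
          intro i _
          ring
        rw [this, hsum', one_mul, hPv]
        ring
      apply (Finset.sum_eq_zero_iff_of_nonneg ?_).mp hsumz
      intro i hi
      exact mul_nonneg (c.ht0 _) (sub_nonneg.mpr (c.hf i (Nat.lt_succ_iff.mp (Finset.mem_range.mp hi))))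
    have cols0 : ∀ j ∈ range (c.a+1), c.s j * (c.v - c.g (j+1)) = 0 := by
      have hsumz : ∑ j ∈ range (c.a+1), c.s j * (c.v - c.g (j+1)) = 0 := by
        have : ∑ j ∈ range (c.a+1), c.s j * (c.v - c.g (j+1))
            = (∑ j ∈ range (c.a+1), c.s j) * c.v - P := by
          rw [hfub, Finset.sum_mul, ← Finset.sum_sub_distrib]
          apply Finset.sum_congr rfl
          intro j _
          ring
        rw [this, c.hs1, one_mul, hPv]
        ring
      apply (Finset.sum_eq_zero_iff_of_nonneg ?_).mp hsumz
      intro j hj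
      exact mul_nonneg (c.hs0 _) (sub_nonneg.mpr (hgle j (Nat.lt_succ_iff.mp (Finset.mem_range.mp hj))))
    have hf1 : c.f 1 = c.v := by
      have he : 1 + (c.mT - 1) = c.mT := by omega
      apply c.tight_down hb0 (c.mT - 1) 1 (le_refl 1) (by have := c.mT_le_b; omega)
      rw [he]
      exact hfmT
    have hs0pos : 0 < c.s 0 := by
      have hrB0 : c.rowB c.s 0 < 0 := by
        have := c.f_succ 0
        rw [hf1] at this
        linarith
      rcases eq_or_lt_of_le (c.hs0 0) with h | h
      · exact absurd hrB0 (not_lt.mpr (c.rowB_nonneg_of_zero h.symm))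
      · exact h
    have hg1 : c.g 1 = c.v := by
      have := cols0 0 (Finset.mem_range.mpr (by omega))
      rcases mul_eq_zero.mp this with h | h
      · exact absurd h (ne_of_gt hs0pos)
      · linarith [sub_eq_zero.mp h]
    by_cases ht1 : c.t 1 = 0
    · have hcB1 : 0 < c.colB c.t 1 := by
        unfold colB
        apply Finset.sum_pos'
        · intro i _
          by_cases hi1 : i = 1
          · rw [hi1, ht1]; simp
          · exact mul_nonneg (c.ht0 i) (le_of_lt (c.beta_pos (cast_ne (by omega))))
        · refine ⟨c.mT, Finset.mem_range.mpr (by have := c.mT_le_b; omega), ?_⟩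
          have hmT2 : c.mT ≠ 1 := by
            intro h
            have := c.t_mT_pos
            rw [h, ht1] at this
            exact absurd this (lt_irrefl 0)
          exact mul_pos c.t_mT_pos (c.beta_pos (cast_ne (x := 1) (by omega)))
      have hgs := c.g_succ 0
      have hg0 : c.g 0 ≤ c.v := c.hg 0 (Nat.zero_le _)
      rw [hg1] at hgs
      linarith
    · have ht1p : 0 < c.t 1 := lt_of_le_of_ne (c.ht0 1) (Ne.symm ht1)
      have := rows0 0 (Finset.mem_range.mpr (by omega))
      rcases mul_eq_zero.mp this with h | h
      · rw [show (0:ℕ)+1 = 1 from rfl] at h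
        exact absurd h (ne_of_gt ht1p)
      · exact h0 (by linarith [sub_eq_zero.mp h])
  · have hmTm : c.mT = c.m + 1 := by
      have h1 := c.mT_le_m1
      have h2 := c.m_le_a
      omega
    exact ⟨hmTm ▸ c.mT_le_b, hmTm ▸ hfmT⟩


lemma ratio_aux (d : ℕ → ℝ)
    (hd_supp : ∀ j, d j ≠ 0 → 0 < c.s j)
    (hd_sum : ∑ j ∈ range (c.a+1), d j = 0)
    (j0 : ℕ) (hj0 : d j0 ≠ 0)
    (i0 : ℕ) (hi0s : 0 < c.s i0)
    (heqs : c.rowB c.s i0 = 0)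
    (heqd : ∑ j ∈ range (c.a+1), d j * c.beta ((j:ℤ) - (i0:ℤ)) = 0)
    (hmax : ∀ j, 0 < c.s j → d j / c.s j ≤ d i0 / c.s i0) : False := by
  set r0 := d i0 / c.s i0 with hr0def
  have hdi0 : d i0 = r0 * c.s i0 := by
    rw [hr0def]
    field_simp
  have hu : ∀ j, 0 ≤ r0 * c.s j - d j := by
    intro j
    by_cases hj : 0 < c.s j
    · have h1 := hmax j hj
      have h2 : d j / c.s j * c.s j = d j := div_mul_cancel₀ _ (ne_of_gt hj)
      nlinarith
    · have hsj : c.s j = 0 := le_antisymm (not_lt.mp hj) (c.hs0 j)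
      have hdj : d j = 0 := by
        by_contra h
        exact hj (hd_supp j h)
      rw [hsj, hdj]
      simp
  have hui0 : r0 * c.s i0 - d i0 = 0 := by rw [hdi0]; ring
  have hsum0 : ∑ j ∈ range (c.a+1), (r0 * c.s j - d j) * c.beta ((j:ℤ) - (i0:ℤ)) = 0 := by
    have he : ∑ j ∈ range (c.a+1), (r0 * c.s j - d j) * c.beta ((j:ℤ) - (i0:ℤ))
        = r0 * c.rowB c.s i0 - ∑ j ∈ range (c.a+1), d j * c.beta ((j:ℤ) - (i0:ℤ)) := by
      unfold rowB
      rw [Finset.mul_sum, ← Finset.sum_sub_distrib]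
      apply Finset.sum_congr rfl
      intro j _
      ring
    rw [he, heqs, heqd]
    ring
  have hnn : ∀ j ∈ range (c.a+1), 0 ≤ (r0 * c.s j - d j) * c.beta ((j:ℤ) - (i0:ℤ)) := by
    intro j _
    by_cases hji : j = i0
    · rw [hji, hui0]
      simp
    · exact mul_nonneg (hu j) (le_of_lt (c.beta_pos (cast_ne (by omega))))
  have hterms := (Finset.sum_eq_zero_iff_of_nonneg hnn).mp hsum0
  have hall : ∀ j ∈ range (c.a+1), d j = r0 * c.s j := by
    intro j hj
    by_cases hji : j = i0
    · rw [hji]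
      linarith [hui0]
    · have h := hterms j hj
      rcases mul_eq_zero.mp h with h' | h'
      · linarith
      · exact absurd h' (ne_of_gt (c.beta_pos (cast_ne (by omega))))
  have hr0 : r0 = 0 := by
    have h1 : (0:ℝ) = r0 * 1 := by
      rw [← hd_sum, ← c.hs1, Finset.mul_sum]
      exact Finset.sum_congr rfl hall
    linarith
  have hj0a : j0 ∈ range (c.a+1) := by
    have h1 := c.supp_s_le (hd_supp j0 hj0)
    have h2 := c.m_le_a
    exact Finset.mem_range.mpr (by omega)
  exact hj0 (by rw [hall j0 hj0a, hr0]; ring)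

open scoped Classical in
lemma d_eq_zero (d : ℕ → ℝ)
    (hd_supp : ∀ j, d j ≠ 0 → 0 < c.s j)
    (hd_sum : ∑ j ∈ range (c.a+1), d j = 0)
    (x : ℕ)
    (heq : ∀ i, 0 < c.s i → i ≠ x →
      c.rowB c.s i = 0 ∧ (∑ j ∈ range (c.a+1), d j * c.beta ((j:ℤ) - (i:ℤ))) = 0) :
    ∀ j, d j = 0 := by
  by_contra hcon
  push_neg at hcon
  obtain ⟨j0, hj0⟩ := hcon
  have hj0s : 0 < c.s j0 := hd_supp j0 hj0
  have hmemr : ∀ j, 0 < c.s j → j ∈ range (c.a+1) := by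
    intro j hj
    have h1 := c.supp_s_le hj
    have h2 := c.m_le_a
    exact Finset.mem_range.mpr (by omega)
  set supp := (range (c.a+1)).filter (fun j => 0 < c.s j) with hsuppdef
  have hmem : ∀ j, 0 < c.s j → j ∈ supp := by
    intro j hj
    exact Finset.mem_filter.mpr ⟨hmemr j hj, hj⟩
  have hmem' : ∀ j, j ∈ supp → 0 < c.s j := by
    intro j hj
    exact (Finset.mem_filter.mp hj).2
  have hne : supp.Nonempty := ⟨j0, hmem j0 hj0s⟩
  obtain ⟨jp, hjpmem, hjpmax⟩ := Finset.exists_max_image supp (fun j => d j / c.s j) hne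
  obtain ⟨jm, hjmmem, hjmmin⟩ := Finset.exists_min_image supp (fun j => d j / c.s j) hne
  by_cases hpx : jp = x
  · by_cases hmx : jm = x
    · -- all ratios equal; find another support point or conclude directly
      by_cases hex : ∃ j1 ∈ supp, j1 ≠ x
      · obtain ⟨j1, hj1mem, hj1x⟩ := hex
        have hj1s := hmem' j1 hj1mem
        have hreq : ∀ j, 0 < c.s j → d j / c.s j ≤ d j1 / c.s j1 := by
          intro j hj
          have h1 := hjpmax j (hmem j hj)
          have h2 := hjmmin j1 hj1mem
          rw [hpx] at h1
          rw [hmx] at h2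
          linarith
        obtain ⟨he1, he2⟩ := heq j1 hj1s hj1x
        exact c.ratio_aux d hd_supp hd_sum j0 hj0 j1 hj1s he1 he2 hreq
      · push_neg at hex
        have hjx : j0 = x := hex j0 (hmem j0 hj0s)
        have hdz : ∀ j ∈ range (c.a+1), j ≠ x → d j = 0 := by
          intro j _ hj
          by_contra h
          exact hj (hex j (hmem j (hd_supp j h)))
        have : ∑ j ∈ range (c.a+1), d j = d x := by
          apply Finset.sum_eq_single
          · intro j hj hjx'
            exact hdz j hj hjx'
          · intro hx
            exact absurd (hjx ▸ hmemr j0 hj0s) hx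
        rw [hd_sum] at this
        exact hj0 (by rw [hjx, ← this])
    · -- min case via -d
      have hjms := hmem' jm hjmmem
      obtain ⟨he1, he2⟩ := heq jm hjms hmx
      have he2' : ∑ j ∈ range (c.a+1), (-(d j)) * c.beta ((j:ℤ) - (jm:ℤ)) = 0 := by
        have he : ∑ j ∈ range (c.a+1), (-(d j)) * c.beta ((j:ℤ) - (jm:ℤ))
            = -(∑ j ∈ range (c.a+1), d j * c.beta ((j:ℤ) - (jm:ℤ))) := by
          rw [← Finset.sum_neg_distrib]
          apply Finset.sum_congr rfl
          intro j _
          ring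
        rw [he, he2]
        ring
      apply c.ratio_aux (fun j => -(d j)) (fun j hj => hd_supp j (by simpa using hj))
        (by simp [Finset.sum_neg_distrib, hd_sum]) j0 (by simpa using hj0) jm hjms he1 he2'
      intro j hj
      have hmin := hjmmin j (hmem j hj)
      show -(d j) / c.s j ≤ -(d jm) / c.s jm
      rw [neg_div, neg_div]
      exact neg_le_neg hmin
  · have hjps := hmem' jp hjpmem
    have hreq : ∀ j, 0 < c.s j → d j / c.s j ≤ d jp / c.s jp := by
      intro j hj
      exact hjpmax j (hmem j hj)
    obtain ⟨he1, he2⟩ := heq jp hjps hpx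
    exact c.ratio_aux d hd_supp hd_sum j0 hj0 jp hjps he1 he2 hreq


lemma d_zero (d : ℕ → ℝ)
    (hd_supp : ∀ j, d j ≠ 0 → 0 < c.s j)
    (hd_sum : ∑ j ∈ range (c.a+1), d j = 0)
    (hd_row : ∀ i, i ≤ c.b → c.f i = c.v →
      (∑ j ∈ range (c.a+1), d j * c.al ((j:ℤ) - (i:ℤ))) = 0) :
    ∀ j, d j = 0 := by
  by_cases htwo : ∃ j1 j2, j1 < j2 ∧ 0 < c.s j1 ∧ 0 < c.s j2
  · obtain ⟨j1, j2, h12, h1, h2⟩ := htwo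
    have hb0 := c.beta0_neg h12 h1 h2
    have hstepd : ∀ i, i ≤ c.b → c.f i = c.v → i+1 ≤ c.b → c.f (i+1) = c.v →
        c.rowB c.s i = 0 ∧ (∑ j ∈ range (c.a+1), d j * c.beta ((j:ℤ) - (i:ℤ))) = 0 := by
      intro i hib hfi hib1 hfi1
      constructor
      · have h := c.f_succ i
        rw [hfi, hfi1] at h
        linarith
      · have e1 := hd_row i hib hfi
        have e2 := hd_row (i+1) hib1 hfi1
        have e3 := c.row_succ d i
        unfold rowF rowB at e3
        rw [e1, e2] at e3
        linarith
    have hfmT : c.f c.mT = c.v := c.hslack_t c.mT c.t_mT_pos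
    have htight1 : ∀ i, 1 ≤ i → i ≤ c.mT → c.f i = c.v := by
      intro i hi1 hi2
      have he : i + (c.mT - i) = c.mT := by omega
      apply c.tight_down hb0 (c.mT - i) i hi1 (by have := c.mT_le_b; omega)
      rw [he]
      exact hfmT
    by_cases hf0 : c.f 0 = c.v
    · apply c.d_eq_zero d hd_supp hd_sum c.m
      intro i hsi hix
      have hi_le : i ≤ c.m := c.supp_s_le hsi
      have hilt : i < c.m := lt_of_le_of_ne hi_le hix
      have hmmT := c.m_le_mT
      have hmTb := c.mT_le_b
      have hfi : c.f i = c.v := by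
        rcases Nat.eq_zero_or_pos i with h | h
        · rw [h]; exact hf0
        · exact htight1 i h (by omega)
      have hfi1 : c.f (i+1) = c.v := htight1 (i+1) (by omega) (by omega)
      exact hstepd i (by omega) hfi (by omega) hfi1
    · obtain ⟨hmb, hfm1⟩ := c.zero_slack hb0 hf0
      apply c.d_eq_zero d hd_supp hd_sum 0
      intro i hsi hix
      have hi_le : i ≤ c.m := c.supp_s_le hsi
      have hi1 : 1 ≤ i := by omega
      have htight2 : ∀ k, 1 ≤ k → k ≤ c.m+1 → c.f k = c.v := by
        intro k hk1 hk2
        have he : k + (c.m+1 - k) = c.m+1 := by omega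
        apply c.tight_down hb0 (c.m+1-k) k hk1 (by omega)
        rw [he]
        exact hfm1
      exact hstepd i (by omega) (htight2 i hi1 (by omega)) (by omega)
        (htight2 (i+1) (by omega) (by omega))
  · push_neg at htwo
    obtain ⟨jx, hjxa, hjx⟩ := c.ex_s
    apply c.d_eq_zero d hd_supp hd_sum jx
    intro i hsi hix
    exfalso
    rcases Nat.lt_trichotomy i jx with h | h | h
    · exact absurd hjx (not_lt.mpr (htwo i jx h hsi))
    · exact hix h
    · exact absurd hsi (not_lt.mpr (htwo jx i h hjx))

end Ctx
end Stmt7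


/-- in a precise all-pay bidding game, the player with advantage
has a unique Nash equilibrium strategy: if `S_A` and `S_A'` are both
equilibrium strategies for A (each part of some Nash equilibrium), then
`S_A = S_A'`. -/
theorem stmt_7 (a b : ℕ) (α : ℤ → ℝ) (hprec : Precise α)
    (M : Matrix (Fin (b + 1)) (Fin (a + 1)) ℝ)
    (hM : ∀ (i : Fin (b + 1)) (j : Fin (a + 1)), M i j = α ((j : ℤ) - (i : ℤ)))
    (SA SA' : Fin (a + 1) → ℝ) (SB SB' : Fin (b + 1) → ℝ)
    (hNash : IsNash M SA SB) (hNash' : IsNash M SA' SB') :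
    SA = SA' := by
  classical
  obtain ⟨hα1, hα2⟩ := hprec
  obtain ⟨hSA, hSB, hA1, hA2⟩ := hNash
  obtain ⟨hSA', hSB', hA1', hA2'⟩ := hNash'
  set v : ℝ := payoff M SA SB with hv
  set v' : ℝ := payoff M SA' SB' with hv'
  have hpure : ∀ {n : ℕ} (k : Fin n), IsProbVec (fun x : Fin n => if x = k then (1:ℝ) else 0) := by
    intro n k
    constructor
    · intro x
      by_cases h : x = k <;> simp [h]
    · simp
  have hrow_pay : ∀ (S : Fin (a+1) → ℝ) (i : Fin (b+1)),
      payoff M S (fun x => if x = i then (1:ℝ) else 0) = ∑ j, M i j * S j := by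
    intro S i
    unfold payoff Matrix.mulVec dotProduct
    rw [Finset.sum_eq_single i]
    · simp
    · intro x _ hx
      simp [hx]
    · intro hx
      exact absurd (Finset.mem_univ i) hx
  have hcol_pay : ∀ (T : Fin (b+1) → ℝ) (j : Fin (a+1)),
      payoff M (fun x => if x = j then (1:ℝ) else 0) T = ∑ i, T i * M i j := by
    intro T j
    unfold payoff Matrix.mulVec dotProduct
    apply Finset.sum_congr rfl
    intro i _
    congr 1
    rw [Finset.sum_eq_single j]
    · simp
    · intro x _ hx
      simp [hx]
    · intro hx
      exact absurd (Finset.mem_univ j) hx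
  have rowsA : ∀ i : Fin (b+1), v ≤ ∑ j, M i j * SA j := by
    intro i
    have h := hA2 _ (hpure i)
    rwa [hrow_pay SA i] at h
  have rowsA' : ∀ i : Fin (b+1), v' ≤ ∑ j, M i j * SA' j := by
    intro i
    have h := hA2' _ (hpure i)
    rwa [hrow_pay SA' i] at h
  have colsB : ∀ j : Fin (a+1), ∑ i, SB i * M i j ≤ v := by
    intro j
    have h := hA1 _ (hpure j)
    rwa [hcol_pay SB j] at h
  have colsB' : ∀ j : Fin (a+1), ∑ i, SB' i * M i j ≤ v' := by
    intro j
    have h := hA1' _ (hpure j)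
    rwa [hcol_pay SB' j] at h
  have hpay_row : ∀ (S : Fin (a+1) → ℝ) (T : Fin (b+1) → ℝ),
      payoff M S T = ∑ i, T i * ∑ j, M i j * S j := by
    intro S T
    unfold payoff Matrix.mulVec dotProduct
    rfl
  have hexch : ∀ (S : Fin (a+1) → ℝ) (T : Fin (b+1) → ℝ),
      payoff M S T = ∑ j, S j * (∑ i, T i * M i j) := by
    intro S T
    rw [hpay_row]
    calc ∑ i, T i * ∑ j, M i j * S j
        = ∑ i, ∑ j, T i * (M i j * S j) := by
          apply Finset.sum_congr rfl
          intro i _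
          rw [Finset.mul_sum]
      _ = ∑ j, ∑ i, T i * (M i j * S j) := Finset.sum_comm
      _ = ∑ j, S j * (∑ i, T i * M i j) := by
          apply Finset.sum_congr rfl
          intro j _
          rw [Finset.mul_sum]
          apply Finset.sum_congr rfl
          intro i _
          ring
  have probpay_ge : ∀ (S : Fin (a+1) → ℝ) (T : Fin (b+1) → ℝ) (w : ℝ),
      IsProbVec T → (∀ i, w ≤ ∑ j, M i j * S j) → w ≤ payoff M S T := by
    intro S T w hT hrows
    rw [hpay_row]
    have h1 : ∑ i, T i * w ≤ ∑ i, T i * ∑ j, M i j * S j :=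
      Finset.sum_le_sum fun i _ => mul_le_mul_of_nonneg_left (hrows i) (hT.1 i)
    rwa [← Finset.sum_mul, hT.2, one_mul] at h1
  have hval1 : v' ≤ v := by
    have h1 : payoff M SA' SB ≤ v := hA1 SA' hSA'
    have h2 : v' ≤ payoff M SA' SB := probpay_ge SA' SB v' hSB rowsA'
    linarith
  have hval2 : v ≤ v' := by
    have h1 : payoff M SA SB' ≤ v' := hA1' SA hSA
    have h2 : v ≤ payoff M SA SB' := probpay_ge SA SB' v hSB' rowsA
    linarith
  have hvv : v' = v := le_antisymm hval1 hval2
  -- conversions to ℕ-indexed sums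
  have conv_s : ∀ (i : ℕ) (hi : i < b+1),
      (∑ j ∈ range (a+1), (if h : j < a+1 then (SA ⟨j,h⟩ + SA' ⟨j,h⟩)/2 else 0) * α ((j:ℤ) - (i:ℤ)))
        = ((∑ j, M ⟨i,hi⟩ j * SA j) + (∑ j, M ⟨i,hi⟩ j * SA' j))/2 := by
    intro i hi
    refine (Stmt7.sum_ext (n := a+1) (fun jf => (SA jf + SA' jf)/2)
      (fun k => α ((k:ℤ) - (i:ℤ)))).trans ?_
    rw [← Finset.sum_add_distrib, Finset.sum_div]
    apply Finset.sum_congr rfl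
    intro j _
    rw [hM]
    push_cast
    ring
  have conv_d : ∀ (i : ℕ) (hi : i < b+1),
      (∑ j ∈ range (a+1), (if h : j < a+1 then SA ⟨j,h⟩ - SA' ⟨j,h⟩ else 0) * α ((j:ℤ) - (i:ℤ)))
        = (∑ j, M ⟨i,hi⟩ j * SA j) - (∑ j, M ⟨i,hi⟩ j * SA' j) := by
    intro i hi
    refine (Stmt7.sum_ext (n := a+1) (fun jf => SA jf - SA' jf)
      (fun k => α ((k:ℤ) - (i:ℤ)))).trans ?_
    rw [← Finset.sum_sub_distrib]
    apply Finset.sum_congr rfl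
    intro j _
    rw [hM]
    push_cast
    ring
  have conv_t : ∀ (j : ℕ) (hj : j < a+1),
      (∑ i ∈ range (b+1), (if h : i < b+1 then (SB ⟨i,h⟩ + SB' ⟨i,h⟩)/2 else 0) * α ((j:ℤ) - (i:ℤ)))
        = ((∑ i, SB i * M i ⟨j,hj⟩) + (∑ i, SB' i * M i ⟨j,hj⟩))/2 := by
    intro j hj
    refine (Stmt7.sum_ext (n := b+1) (fun ifn => (SB ifn + SB' ifn)/2)
      (fun k => α ((j:ℤ) - (k:ℤ)))).trans ?_
    rw [← Finset.sum_add_distrib, Finset.sum_div]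
    apply Finset.sum_congr rfl
    intro i _
    rw [hM]
    push_cast
    ring
  -- build the context
  let c : Stmt7.Ctx := {
    a := a, b := b, al := α, v := v,
    s := fun j => if h : j < a+1 then (SA ⟨j,h⟩ + SA' ⟨j,h⟩)/2 else 0,
    t := fun i => if h : i < b+1 then (SB ⟨i,h⟩ + SB' ⟨i,h⟩)/2 else 0,
    hal1 := hα1, hal2 := hα2,
    hs0 := by
      intro j
      split
      · have h1 := hSA.1 ⟨j, by assumption⟩
        have h2 := hSA'.1 ⟨j, by assumption⟩
        linarith
      · exact le_refl 0,
    hs_out := by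
      intro j hj
      rw [dif_neg (by omega)],
    hs1 := by
      refine (Stmt7.sum_ext0 (n := a+1) (fun jf => (SA jf + SA' jf)/2)).trans ?_
      rw [← Finset.sum_div, Finset.sum_add_distrib, hSA.2, hSA'.2]
      norm_num,
    ht0 := by
      intro i
      split
      · have h1 := hSB.1 ⟨i, by assumption⟩
        have h2 := hSB'.1 ⟨i, by assumption⟩
        linarith
      · exact le_refl 0,
    ht_out := by
      intro i hi
      rw [dif_neg (by omega)],
    ht1 := by
      refine (Stmt7.sum_ext0 (n := b+1) (fun ifn => (SB ifn + SB' ifn)/2)).trans ?_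
      rw [← Finset.sum_div, Finset.sum_add_distrib, hSB.2, hSB'.2]
      norm_num,
    hf := by
      intro i hib
      have hi : i < b+1 := by omega
      rw [conv_s i hi]
      have r1 := rowsA ⟨i, hi⟩
      have r2 := rowsA' ⟨i, hi⟩
      rw [hvv] at r2
      linarith,
    hg := by
      intro j hja
      have hj : j < a+1 := by omega
      rw [conv_t j hj]
      have r1 := colsB ⟨j, hj⟩
      have r2 := colsB' ⟨j, hj⟩
      rw [hvv] at r2
      linarith }
  have hd_supp : ∀ j, (if h : j < a+1 then SA ⟨j,h⟩ - SA' ⟨j,h⟩ else 0) ≠ 0 →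
      (0:ℝ) < (if h : j < a+1 then (SA ⟨j,h⟩ + SA' ⟨j,h⟩)/2 else 0) := by
    intro j hj
    by_cases h : j < a+1
    · rw [dif_pos h] at hj ⊢
      have h1 := hSA.1 ⟨j, h⟩
      have h2 := hSA'.1 ⟨j, h⟩
      rcases eq_or_lt_of_le h1 with he1 | he1
      · rcases eq_or_lt_of_le h2 with he2 | he2
        · exfalso
          apply hj
          rw [← he1, ← he2]
          ring
        · linarith
      · linarith
    · rw [dif_neg h] at hj
      exact absurd rfl hj
  have hd_sum : ∑ j ∈ range (a+1), (if h : j < a+1 then SA ⟨j,h⟩ - SA' ⟨j,h⟩ else 0) = 0 := by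
    refine (Stmt7.sum_ext0 (n := a+1) (fun jf => SA jf - SA' jf)).trans ?_
    rw [Finset.sum_sub_distrib, hSA.2, hSA'.2]
    ring
  have hd_row : ∀ i, i ≤ b → c.f i = c.v →
      (∑ j ∈ range (a+1), (if h : j < a+1 then SA ⟨j,h⟩ - SA' ⟨j,h⟩ else 0) * α ((j:ℤ) - (i:ℤ))) = 0 := by
    intro i hib hfi
    have hi : i < b+1 := by omega
    have eS : c.f i = ((∑ j, M ⟨i,hi⟩ j * SA j) + (∑ j, M ⟨i,hi⟩ j * SA' j))/2 := conv_s i hi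
    have r1 := rowsA ⟨i, hi⟩
    have r2 := rowsA' ⟨i, hi⟩
    rw [hvv] at r2
    have hfi' : ((∑ j, M ⟨i,hi⟩ j * SA j) + (∑ j, M ⟨i,hi⟩ j * SA' j))/2 = v := by
      rw [← eS]
      exact hfi
    have hRA : (∑ j, M ⟨i,hi⟩ j * SA j) = v := by linarith
    have hRA' : (∑ j, M ⟨i,hi⟩ j * SA' j) = v := by linarith
    rw [conv_d i hi, hRA, hRA']
    ring
  have hdz := c.d_zero (fun j => if h : j < a+1 then SA ⟨j,h⟩ - SA' ⟨j,h⟩ else 0)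
    hd_supp hd_sum hd_row
  funext jF
  have h := hdz (jF : ℕ)
  rw [dif_pos jF.isLt] at h
  exact sub_eq_zero.mp h
end

section
/- In a precise game where the advantaged player A's unique equilibrium strategy S_A has length ℓ, every equilibrium strategy of player B is a convex combination t·R(S_A) + (1−t)·(0, R(S_A)) for some t ∈ [0,1], where R(S_A) is the reverse of S_A and (0, R(S_A)) is R(S_A) shifted up by one bid. -/
open Finset

def extv {n : ℕ} (X : Fin (n+1) → ℝ) (k : ℕ) : ℝ :=
  if h : k < n+1 then X ⟨k, h⟩ else 0

lemma extv_apply {n : ℕ} (X : Fin (n+1) → ℝ) (k : Fin (n+1)) :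
    extv X (k : ℕ) = X k := by
  simp [extv, k.isLt]

lemma probVec_single {n : ℕ} (i : Fin n) :
    IsProbVec (fun k : Fin n => if k = i then (1:ℝ) else 0) := by
  constructor
  · intro k; by_cases h : k = i <;> simp [h]
  · simp

lemma slack_ge {s : Finset ℕ} (x c : ℕ → ℝ) (v : ℝ)
    (hx : ∀ i ∈ s, 0 ≤ x i) (hc : ∀ i ∈ s, v ≤ c i)
    (hx1 : ∑ i ∈ s, x i = 1) (hsum : ∑ i ∈ s, x i * c i = v) :
    ∀ i ∈ s, x i ≠ 0 → c i = v := by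
  have h0 : ∑ i ∈ s, x i * (c i - v) = 0 := by
    simp only [mul_sub, Finset.sum_sub_distrib, hsum, ← Finset.sum_mul, hx1]
    ring
  have hnn : ∀ i ∈ s, 0 ≤ x i * (c i - v) := fun i hi =>
    mul_nonneg (hx i hi) (sub_nonneg.2 (hc i hi))
  intro i hi hxi
  have := (Finset.sum_eq_zero_iff_of_nonneg hnn).1 h0 i hi
  rcases mul_eq_zero.1 this with h | h
  · exact absurd h hxi
  · linarith [sub_eq_zero.1 h]

lemma slack_le {s : Finset ℕ} (x c : ℕ → ℝ) (v : ℝ)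
    (hx : ∀ i ∈ s, 0 ≤ x i) (hc : ∀ i ∈ s, c i ≤ v)
    (hx1 : ∑ i ∈ s, x i = 1) (hsum : ∑ i ∈ s, x i * c i = v) :
    ∀ i ∈ s, x i ≠ 0 → c i = v := by
  intro i hi hxi
  have := slack_ge x (fun j => -c j) (-v) hx (fun j hj => neg_le_neg (hc j hj)) hx1
    (by simp only [mul_neg, Finset.sum_neg_distrib, hsum]) i hi hxi
  simpa using congrArg Neg.neg this

def Fv (α : ℤ → ℝ) {a : ℕ} (SA : Fin (a+1) → ℝ) (i : ℤ) : ℝ :=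
  ∑ j ∈ Finset.range (a+1), extv SA j * α (↑j - i)

def Gv (α : ℤ → ℝ) {b : ℕ} (X : Fin (b+1) → ℝ) (j : ℤ) : ℝ :=
  ∑ k ∈ Finset.range (b+1), extv X k * α (j - ↑k)

section Pay
variable {a b : ℕ} {α : ℤ → ℝ} {M : Matrix (Fin (b+1)) (Fin (a+1)) ℝ}
  (hM : ∀ (i : Fin (b + 1)) (j : Fin (a + 1)), M i j = α ((j : ℤ) - (i : ℤ)))

include hM

lemma mulVec_eq (SA : Fin (a+1) → ℝ) (i : Fin (b+1)) :
    M.mulVec SA i = Fv α SA (i : ℕ) := by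
  have : M.mulVec SA i = ∑ j : Fin (a+1), extv SA (j:ℕ) * α ((j:ℕ) - ((i:ℕ):ℤ)) := by
    unfold Matrix.mulVec dotProduct
    refine Finset.sum_congr rfl fun j _ => ?_
    show M i j * SA j = _
    rw [hM, extv_apply]
    push_cast
    ring
  rw [this, Fv]
  exact Fin.sum_univ_eq_sum_range (fun j => extv SA j * α (↑j - ((i:ℕ):ℤ))) (a+1)

lemma payLeft (SA : Fin (a+1) → ℝ) (X : Fin (b+1) → ℝ) :
    payoff M SA X = ∑ i ∈ Finset.range (b+1), extv X i * Fv α SA i := by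
  have : payoff M SA X = ∑ i : Fin (b+1), extv X (i:ℕ) * Fv α SA ((i:ℕ):ℤ) := by
    unfold payoff
    refine Finset.sum_congr rfl fun i _ => ?_
    rw [mulVec_eq hM, extv_apply]
  rw [this]
  exact Fin.sum_univ_eq_sum_range (fun i => extv X i * Fv α SA i) (b+1)

lemma paySingleB (SA : Fin (a+1) → ℝ) (i : Fin (b+1)) :
    payoff M SA (fun k => if k = i then (1:ℝ) else 0) = Fv α SA (i : ℕ) := by
  unfold payoff
  rw [Finset.sum_eq_single i]
  · simp [mulVec_eq hM]
  · intro k _ hk; simp [hk]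
  · simp

lemma payRight (T : Fin (a+1) → ℝ) (X : Fin (b+1) → ℝ) :
    payoff M T X = ∑ j ∈ Finset.range (a+1), extv T j * Gv α X j := by
  have h1 : payoff M T X
      = ∑ i ∈ Finset.range (b+1), ∑ j ∈ Finset.range (a+1), extv T j * (extv X i * α (↑j - ↑i)) := by
    rw [payLeft hM T X]
    refine Finset.sum_congr rfl fun i _ => ?_
    unfold Fv
    rw [Finset.mul_sum]
    refine Finset.sum_congr rfl fun j _ => by ring
  rw [h1, Finset.sum_comm]
  unfold Gv
  refine Finset.sum_congr rfl fun j _ => ?_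
  rw [Finset.mul_sum]

lemma paySingleA (X : Fin (b+1) → ℝ) (j : Fin (a+1)) :
    payoff M (fun k => if k = j then (1:ℝ) else 0) X = Gv α X (j : ℕ) := by
  rw [payRight hM]
  rw [Finset.sum_eq_single (j : ℕ)]
  · rw [extv_apply]
    simp
  · intro k hk hkj
    have : extv (fun k : Fin (a+1) => if k = j then (1:ℝ) else 0) k = 0 := by
      unfold extv
      split
      · rename_i h
        have : (⟨k, h⟩ : Fin (a+1)) ≠ j := by
          intro he
          exact hkj (by rw [← he])
        simp [this]
      · rfl
    rw [this, zero_mul]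
  · intro h
    exact absurd (Finset.mem_range.2 j.isLt) h

end Pay

set_option maxHeartbeats 2000000 in
/-- in a precise game where the advantaged player A's unique
equilibrium strategy `S_A` has length `ℓ`, every equilibrium strategy of
player B is a convex combination `t • R(S_A) + (1 - t) • (0, R(S_A))` for some
`t ∈ [0,1]`, where `R(S_A)` is the reverse of `S_A` and `(0, R(S_A))` is
`R(S_A)` shifted up by one bid. -/
theorem stmt_8 (a b : ℕ) (α : ℤ → ℝ) (hprec : Precise α)
    (M : Matrix (Fin (b + 1)) (Fin (a + 1)) ℝ)
    (hM : ∀ (i : Fin (b + 1)) (j : Fin (a + 1)), M i j = α ((j : ℤ) - (i : ℤ)))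
    (SA : Fin (a + 1) → ℝ)
    (ℓ : ℕ) (hℓ1 : 1 ≤ ℓ) (hℓa : ℓ ≤ a + 1) (hℓb : ℓ ≤ b)
    -- `S_A` has length `ℓ`:
    (hlen : SA ⟨ℓ - 1, by omega⟩ ≠ 0)
    (hzero : ∀ m : Fin (a + 1), ℓ ≤ (m : ℕ) → SA m = 0)
    -- `S_A` is A's (unique) equilibrium strategy: it forms a Nash equilibrium
    -- with the reverse `R(S_A)`:
    (hNashRev : IsNash M SA (fun k : Fin (b + 1) =>
      if h : (k : ℕ) < ℓ then SA ⟨ℓ - 1 - (k : ℕ), by omega⟩ else 0))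
    -- and A has no other equilibrium strategy:
    (huniq : ∀ (SA' : Fin (a + 1) → ℝ) (SB' : Fin (b + 1) → ℝ),
      IsNash M SA' SB' → SA' = SA) :
    -- every equilibrium strategy of B is a convex combination of the reverse
    -- and the shifted reverse:
    ∀ SB : Fin (b + 1) → ℝ, IsNash M SA SB →
      ∃ t : ℝ, 0 ≤ t ∧ t ≤ 1 ∧ ∀ k : Fin (b + 1),
        SB k = t * (if h : (k : ℕ) < ℓ then SA ⟨ℓ - 1 - (k : ℕ), by omega⟩ else 0)
          + (1 - t) * (if h : 1 ≤ (k : ℕ) ∧ (k : ℕ) < ℓ + 1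
              then SA ⟨ℓ - (k : ℕ), by omega⟩ else 0) := by
  intro SB hNashB
  classical
  have hd1 : ∀ i j : ℤ, 0 ≤ i → i < j → α j < α i := hprec.1
  have hd2 : ∀ i j : ℤ, i < j → j < 0 → α j < α i := hprec.2
  obtain ⟨hpSA, hpR, hAmaxR, hBminR⟩ := hNashRev
  obtain ⟨-, hpSB, hAmaxB, hBminB⟩ := hNashB
  set R : Fin (b+1) → ℝ := (fun k : Fin (b + 1) =>
      if h : (k : ℕ) < ℓ then SA ⟨ℓ - 1 - (k : ℕ), by omega⟩ else 0) with hRdef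
  set v : ℝ := payoff M SA R with hvdef
  -- basic facts about SA in extended form
  have hsann : ∀ j : ℕ, 0 ≤ extv SA j := by
    intro j
    unfold extv
    split
    · exact hpSA.1 _
    · exact le_refl 0
  have hsa0 : ∀ j : ℕ, ℓ ≤ j → extv SA j = 0 := by
    intro j hj
    unfold extv
    split
    · exact hzero _ hj
    · rfl
  have hsatop : 0 < extv SA (ℓ-1) := by
    have he : extv SA (ℓ-1) = SA ⟨ℓ-1, by omega⟩ := by
      unfold extv
      rw [dif_pos (by omega : ℓ - 1 < a + 1)]
    rw [he]
    exact lt_of_le_of_ne (hpSA.1 _) (Ne.symm hlen)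
  have hsa_sum' : ∑ j ∈ Finset.range (a+1), extv SA j = 1 := by
    rw [← Fin.sum_univ_eq_sum_range (fun j => extv SA j) (a+1)]
    rw [← hpSA.2]
    exact Finset.sum_congr rfl fun j _ => extv_apply SA j
  have hsa_sum : ∑ j ∈ Finset.range ℓ, extv SA j = 1 := by
    rw [← hsa_sum']
    refine Finset.sum_subset (by intro x hx; simp only [Finset.mem_range] at *; omega) ?_
    intro x _ hx
    exact hsa0 x (by simpa using hx)
  -- extended R
  have hRext : ∀ k : ℕ, extv R k = (if k < ℓ then extv SA (ℓ-1-k) else 0) := by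
    intro k
    unfold extv
    by_cases hk : k < b+1
    · rw [dif_pos hk, hRdef]
      by_cases hkl : k < ℓ
      · rw [if_pos hkl]
        simp only [dif_pos hkl]
        rw [dif_pos (by omega : ℓ - 1 - k < a + 1)]
      · rw [if_neg hkl]
        simp only [dif_neg hkl]
    · rw [dif_neg hk, if_neg (by omega)]
  have hRext_sum : ∑ k ∈ Finset.range (b+1), extv R k = 1 := by
    rw [← Fin.sum_univ_eq_sum_range (fun k => extv R k) (b+1), ← hpR.2]
    exact Finset.sum_congr rfl fun k _ => extv_apply R k
  -- Nash value facts
  have hFge : ∀ i : ℕ, i < b+1 → v ≤ Fv α SA ↑i := by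
    intro i hi
    have := hBminR _ (probVec_single (⟨i, hi⟩ : Fin (b+1)))
    rwa [paySingleB hM] at this
  have hvF : ∑ i ∈ Finset.range (b+1), extv R i * Fv α SA ↑i = v := by
    rw [← payLeft hM SA R]
  have hRF : ∀ i : ℕ, i < b+1 → extv R i ≠ 0 → Fv α SA ↑i = v :=
    fun i hi hne => slack_ge (extv R) (fun k => Fv α SA ↑k) v
      (fun k _ => by rw [hRext]; split; exacts [hsann _, le_refl 0])
      (fun k hk => hFge k (Finset.mem_range.1 hk)) hRext_sum hvF i (Finset.mem_range.2 hi) hne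
  have hGleF : ∀ j : ℕ, j < a+1 → Gv α R ↑j ≤ v := by
    intro j hj
    have := hAmaxR _ (probVec_single (⟨j, hj⟩ : Fin (a+1)))
    rwa [paySingleA hM] at this
  have hvG : ∑ j ∈ Finset.range (a+1), extv SA j * Gv α R ↑j = v := by
    rw [← payRight hM SA R]
  have hSAG : ∀ j : ℕ, j < a+1 → extv SA j ≠ 0 → Gv α R ↑j = v :=
    fun j hj hne => slack_le (extv SA) (fun k => Gv α R ↑k) v (fun k _ => hsann k)
      (fun k hk => hGleF k (Finset.mem_range.1 hk)) hsa_sum' hvG j (Finset.mem_range.2 hj) hne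
  -- restricted-range formulas
  have hFv_low : ∀ i : ℤ, Fv α SA i = ∑ j ∈ Finset.range ℓ, extv SA j * α (↑j - i) := by
    intro i
    unfold Fv
    refine (Finset.sum_subset (by intro x hx; simp only [Finset.mem_range] at *; omega) ?_).symm
    intro x _ hx
    rw [hsa0 x (by simpa using hx), zero_mul]
  have hGv_R : ∀ j : ℤ, Gv α R j = ∑ k ∈ Finset.range ℓ, extv SA (ℓ-1-k) * α (j - ↑k) := by
    intro j
    unfold Gv
    rw [← Finset.sum_subset
      (show Finset.range ℓ ⊆ Finset.range (b+1) by
        intro x hx; simp only [Finset.mem_range] at *; omega)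
      (fun x _ hx => by rw [hRext, if_neg (by simpa using hx), zero_mul])]
    refine Finset.sum_congr rfl fun k hk => ?_
    rw [hRext, if_pos (Finset.mem_range.1 hk)]
  have hGv_R' : ∀ j : ℤ, Gv α R j
      = ∑ k ∈ Finset.range ℓ, extv SA k * α (j - (ℓ:ℤ) + 1 + ↑k) := by
    intro j
    rw [hGv_R]
    rw [← Finset.sum_range_reflect (fun k => extv SA k * α (j - (ℓ:ℤ) + 1 + ↑k)) ℓ]
    refine Finset.sum_congr rfl fun k hk => ?_
    have hkℓ : k < ℓ := Finset.mem_range.1 hk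
    have harg : j - ↑k = j - (ℓ:ℤ) + 1 + ↑(ℓ-1-k) := by omega
    rw [harg]
  -- monotonicity of F beyond ℓ
  have hFmono : ∀ i : ℤ, (ℓ:ℤ) ≤ i → Fv α SA i < Fv α SA (i+1) := by
    intro i hi
    rw [hFv_low, hFv_low]
    refine Finset.sum_lt_sum (fun j hj => ?_) ⟨ℓ-1, Finset.mem_range.2 (by omega), ?_⟩
    · have hjℓ : j < ℓ := Finset.mem_range.1 hj
      have hα : α (↑j - i) < α (↑j - (i+1)) := hd2 _ _ (by omega) (by omega)
      exact mul_le_mul_of_nonneg_left hα.le (hsann j)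
    · have hα : α ((↑(ℓ-1:ℕ):ℤ) - i) < α ((↑(ℓ-1:ℕ):ℤ) - (i+1)) :=
        hd2 _ _ (by omega) (by omega)
      exact mul_lt_mul_of_pos_left hα hsatop
  have hFgt : ∀ i : ℕ, ℓ + 1 ≤ i → v < Fv α SA ↑i := by
    intro i hi
    induction i, hi using Nat.le_induction with
    | base =>
        have h1 : v ≤ Fv α SA (ℓ:ℤ) := by
          have := hFge ℓ (by omega)
          simpa using this
        have h2 := hFmono (ℓ:ℤ) le_rfl
        have h3 : ((ℓ+1:ℕ):ℤ) = (ℓ:ℤ)+1 := by omega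
        rw [h3]
        linarith
    | succ n hn ih =>
        have h2 := hFmono (n:ℤ) (by omega)
        have h3 : ((n+1:ℕ):ℤ) = (n:ℤ)+1 := by omega
        rw [h3]
        linarith
  -- facts about SB
  have hvSB : payoff M SA SB = v := le_antisymm (hBminB R hpR) (hBminR SB hpSB)
  have hsbnn : ∀ k : ℕ, 0 ≤ extv SB k := by
    intro k
    unfold extv
    split
    · exact hpSB.1 _
    · exact le_refl 0
  have hsb_sum : ∑ k ∈ Finset.range (b+1), extv SB k = 1 := by
    rw [← Fin.sum_univ_eq_sum_range (fun k => extv SB k) (b+1), ← hpSB.2]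
    exact Finset.sum_congr rfl fun k _ => extv_apply SB k
  have hvFSB : ∑ i ∈ Finset.range (b+1), extv SB i * Fv α SA ↑i = v := by
    rw [← payLeft hM SA SB]
    exact hvSB
  have hSBF : ∀ i : ℕ, i < b+1 → extv SB i ≠ 0 → Fv α SA ↑i = v :=
    fun i hi hne => slack_ge (extv SB) (fun k => Fv α SA ↑k) v (fun k _ => hsbnn k)
      (fun k hk => hFge k (Finset.mem_range.1 hk)) hsb_sum hvFSB i (Finset.mem_range.2 hi) hne
  have hsbhi : ∀ k : ℕ, ℓ+1 ≤ k → extv SB k = 0 := by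
    intro k hk
    by_cases hkb : k < b+1
    · by_contra hne
      have h1 := hSBF k hkb hne
      have h2 := hFgt k hk
      linarith
    · unfold extv
      rw [dif_neg hkb]
  have hGSBle : ∀ j : ℕ, j < a+1 → Gv α SB ↑j ≤ v := by
    intro j hj
    have h := hAmaxB _ (probVec_single (⟨j, hj⟩ : Fin (a+1)))
    rw [paySingleA hM] at h
    exact le_of_le_of_eq h hvSB
  have hvGSB : ∑ j ∈ Finset.range (a+1), extv SA j * Gv α SB ↑j = v := by
    rw [← payRight hM SA SB]
    exact hvSB
  have hGSBeq' : ∀ j : ℕ, j < a+1 → extv SA j ≠ 0 → Gv α SB ↑j = v :=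
    fun j hj hne => slack_le (extv SA) (fun k => Gv α SB ↑k) v (fun k _ => hsann k)
      (fun k hk => hGSBle k (Finset.mem_range.1 hk)) hsa_sum' hvGSB j (Finset.mem_range.2 hj) hne
  -- key sign lemma 1 (using the column/G side)
  have hstep1 : ∀ k : ℕ, 1 ≤ k → k ≤ ℓ-1 → extv SA k ≠ 0 →
      0 < extv SA (ℓ-1-k) * (α 0 - α (-1)) := by
    intro k hk1 hkl hne
    have hGk : Gv α R ↑k = v := hSAG k (by omega) hne
    have hGk1 : Gv α R ((k:ℤ) - 1) ≤ v := by
      have h := hGleF (k-1) (by omega)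
      have hc : ((k-1:ℕ):ℤ) = (k:ℤ)-1 := by omega
      rwa [hc] at h
    have hdiff : Gv α R ((k:ℤ) - 1) - Gv α R ↑k
        = ∑ k' ∈ Finset.range ℓ,
            extv SA k' * (α ((k:ℤ) - ↑ℓ + ↑k') - α ((k:ℤ) - ↑ℓ + 1 + ↑k')) := by
      rw [hGv_R' ((k:ℤ) - 1), hGv_R' (k:ℤ), ← Finset.sum_sub_distrib]
      refine Finset.sum_congr rfl fun k' _ => ?_
      have he : (k:ℤ) - 1 - ↑ℓ + 1 + ↑k' = (k:ℤ) - ↑ℓ + ↑k' := by ring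
      rw [he, mul_sub]
    have hm0r : ℓ-1-k ∈ Finset.range ℓ := Finset.mem_range.2 (by omega)
    have hsplit := Finset.sum_eq_sum_sdiff_singleton_add hm0r
      (fun k' => extv SA k' * (α ((k:ℤ) - ↑ℓ + ↑k') - α ((k:ℤ) - ↑ℓ + 1 + ↑k')))
    have hterm : extv SA (ℓ-1-k) * (α ((k:ℤ) - ↑ℓ + ↑(ℓ-1-k)) - α ((k:ℤ) - ↑ℓ + 1 + ↑(ℓ-1-k)))
        = - (extv SA (ℓ-1-k) * (α 0 - α (-1))) := by
      have h1 : (k:ℤ) - ↑ℓ + ↑(ℓ-1-k) = -1 := by omega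
      have h2 : (k:ℤ) - ↑ℓ + 1 + ↑(ℓ-1-k) = 0 := by omega
      rw [h1, h2]
      ring
    have hpos : 0 < ∑ k' ∈ Finset.range ℓ \ {ℓ-1-k},
        extv SA k' * (α ((k:ℤ) - ↑ℓ + ↑k') - α ((k:ℤ) - ↑ℓ + 1 + ↑k')) := by
      refine Finset.sum_pos' (fun k' hk' => ?_) ⟨ℓ-1, ?_, ?_⟩
      · obtain ⟨hk'r, hk'ne⟩ := Finset.mem_sdiff.1 hk'
        have hk'ℓ : k' < ℓ := Finset.mem_range.1 hk'r
        have hk'm : k' ≠ ℓ-1-k := by simpa using hk'ne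
        have hcoef : 0 ≤ α ((k:ℤ) - ↑ℓ + ↑k') - α ((k:ℤ) - ↑ℓ + 1 + ↑k') := by
          rcases lt_or_ge ((k:ℤ) - ↑ℓ + 1 + ↑k') 0 with hlt | hge
          · have := hd2 ((k:ℤ) - ↑ℓ + ↑k') ((k:ℤ) - ↑ℓ + 1 + ↑k') (by omega) hlt
            linarith
          · have h0 : (0:ℤ) ≤ (k:ℤ) - ↑ℓ + ↑k' := by omega
            have := hd1 ((k:ℤ) - ↑ℓ + ↑k') ((k:ℤ) - ↑ℓ + 1 + ↑k') h0 (by omega)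
            linarith
        exact mul_nonneg (hsann k') hcoef
      · refine Finset.mem_sdiff.2 ⟨Finset.mem_range.2 (by omega), ?_⟩
        simp only [Finset.mem_singleton]
        omega
      · have hcoef : 0 < α ((k:ℤ) - ↑ℓ + ↑(ℓ-1:ℕ)) - α ((k:ℤ) - ↑ℓ + 1 + ↑(ℓ-1:ℕ)) := by
          have h := hd1 ((k:ℤ) - 1) (k:ℤ) (by omega) (by omega)
          have e1 : (k:ℤ) - ↑ℓ + ↑(ℓ-1:ℕ) = (k:ℤ) - 1 := by omega
          have e2 : (k:ℤ) - ↑ℓ + 1 + ↑(ℓ-1:ℕ) = (k:ℤ) := by omega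
          rw [e1, e2]
          linarith
        exact mul_pos hsatop hcoef
    have hle : Gv α R ((k:ℤ) - 1) - Gv α R ↑k ≤ 0 := by linarith
    rw [hdiff, hsplit] at hle
    have hterm' := hterm
    linarith
  -- key sign lemma 2 (using the row/F side)
  have hstep2 : ∀ i : ℕ, i + 2 ≤ ℓ → extv SA (ℓ-2-i) ≠ 0 →
      0 < extv SA i * (α 0 - α (-1)) := by
    intro i hi hne
    have hFi1 : Fv α SA ↑(i+1) = v := by
      refine hRF (i+1) (by omega) ?_
      rw [hRext, if_pos (by omega : i+1 < ℓ)]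
      have e : ℓ-1-(i+1) = ℓ-2-i := by omega
      rw [e]
      exact hne
    have hFi : v ≤ Fv α SA ↑i := hFge i (by omega)
    have hdiff : Fv α SA ↑i - Fv α SA ↑(i+1)
        = ∑ j ∈ Finset.range ℓ, extv SA j * (α (↑j - ↑i) - α (↑j - ↑i - 1)) := by
      rw [hFv_low ↑i, hFv_low ↑(i+1), ← Finset.sum_sub_distrib]
      refine Finset.sum_congr rfl fun j _ => ?_
      have he : (↑j:ℤ) - ↑(i+1) = ↑j - ↑i - 1 := by omega
      rw [he, mul_sub]
    have hir : i ∈ Finset.range ℓ := Finset.mem_range.2 (by omega)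
    have hsplit := Finset.sum_eq_sum_sdiff_singleton_add hir
      (fun j => extv SA j * (α (↑j - ↑i) - α (↑j - ↑i - 1)))
    have hterm : extv SA i * (α (↑i - ↑i) - α ((↑i:ℤ) - ↑i - 1))
        = extv SA i * (α 0 - α (-1)) := by
      norm_num
    have hneg : 0 < ∑ j ∈ Finset.range ℓ \ {i},
        -(extv SA j * (α (↑j - ↑i) - α (↑j - ↑i - 1))) := by
      refine Finset.sum_pos' (fun j hj => ?_) ⟨ℓ-1, ?_, ?_⟩
      · obtain ⟨hjr, hjne⟩ := Finset.mem_sdiff.1 hj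
        have hjℓ : j < ℓ := Finset.mem_range.1 hjr
        have hji : j ≠ i := by simpa using hjne
        have hcoef : α (↑j - ↑i) - α (↑j - ↑i - 1) ≤ 0 := by
          rcases lt_or_ge (↑j - (↑i:ℤ)) 0 with hlt | hge
          · have := hd2 ((↑j:ℤ) - ↑i - 1) ((↑j:ℤ) - ↑i) (by omega) hlt
            linarith
          · have := hd1 ((↑j:ℤ) - ↑i - 1) ((↑j:ℤ) - ↑i) (by omega) (by omega)
            linarith
        have := mul_nonpos_iff.2 (Or.inl ⟨hsann j, hcoef⟩)
        linarith
      · refine Finset.mem_sdiff.2 ⟨Finset.mem_range.2 (by omega), ?_⟩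
        simp only [Finset.mem_singleton]
        omega
      · have hcoef : α ((↑(ℓ-1:ℕ):ℤ) - ↑i) - α ((↑(ℓ-1:ℕ):ℤ) - ↑i - 1) < 0 := by
          have := hd1 ((↑(ℓ-1:ℕ):ℤ) - ↑i - 1) ((↑(ℓ-1:ℕ):ℤ) - ↑i) (by omega) (by omega)
          linarith
        have := mul_pos hsatop (neg_pos.2 hcoef)
        linarith [this]
    rw [Finset.sum_neg_distrib] at hneg
    have hle : 0 ≤ Fv α SA ↑i - Fv α SA ↑(i+1) := by linarith
    rw [hdiff, hsplit] at hle
    rw [← hterm]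
    linarith
  -- gap-freeness of SA
  have gapfree : ∀ j : ℕ, j < ℓ → 0 < extv SA j := by
    rcases Nat.lt_or_ge ℓ 2 with h2 | h2
    · intro j hj
      have hj0 : j = ℓ-1 := by omega
      rw [hj0]
      exact hsatop
    · have hb : 0 < extv SA 0 * (α 0 - α (-1)) := by
        have h := hstep1 (ℓ-1) (by omega) (by omega) (ne_of_gt hsatop)
        have e : ℓ-1-(ℓ-1) = 0 := by omega
        rwa [e] at h
      have key : ∀ e : ℕ, e ≤ ℓ-1 → 0 < extv SA (ℓ-1-e) := by
        intro e
        induction e with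
        | zero => intro _; simpa using hsatop
        | succ n ih =>
          intro hn
          have h1 : 0 < extv SA (ℓ-1-n) := ih (by omega)
          have h2' : 0 < extv SA n := by
            have h := hstep1 (ℓ-1-n) (by omega) (by omega) (ne_of_gt h1)
            have e1 : ℓ-1-(ℓ-1-n) = n := by omega
            rw [e1] at h
            rcases mul_pos_iff.1 h with ⟨hh,_⟩ | ⟨hh,_⟩
            · exact hh
            · exact absurd hh (not_lt.2 (hsann n))
          have h3 := hstep2 (ℓ-2-n) (by omega) (by
            have e2 : ℓ-2-(ℓ-2-n) = n := by omega
            rw [e2]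
            exact ne_of_gt h2')
          have e3 : ℓ-1-(n+1) = ℓ-2-n := by omega
          rw [e3]
          rcases mul_pos_iff.1 h3 with ⟨hh,_⟩ | ⟨hh,_⟩
          · exact hh
          · exact absurd hh (not_lt.2 (hsann (ℓ-2-n)))
      intro j hj
      have h := key (ℓ-1-j) (by omega)
      have e : ℓ-1-(ℓ-1-j) = j := by omega
      rwa [e] at h
  have hFeqv : ∀ i : ℕ, i < ℓ → Fv α SA ↑i = v := by
    intro i hi
    refine hRF i (by omega) ?_
    rw [hRext, if_pos hi]
    exact ne_of_gt (gapfree (ℓ-1-i) (by omega))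
  have hGSBeq : ∀ j : ℕ, j < ℓ → Gv α SB ↑j = v :=
    fun j hj => hGSBeq' j (by omega) (ne_of_gt (gapfree j hj))
  have hGReqv : ∀ j : ℕ, j < ℓ → Gv α R ↑j = v :=
    fun j hj => hSAG j (by omega) (ne_of_gt (gapfree j hj))
  -- the convex combination decomposition
  have hsa0pos : 0 < extv SA 0 := gapfree 0 (by omega)
  set s : ℝ := extv SB ℓ / extv SA 0 with hsdef
  have hs_nn : 0 ≤ s := div_nonneg (hsbnn ℓ) (le_of_lt hsa0pos)
  set z : ℕ → ℝ := fun k => extv SB k - (1-s) * (if k < ℓ then extv SA (ℓ-1-k) else 0)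
      - s * (if 1 ≤ k ∧ k < ℓ+1 then extv SA (ℓ-k) else 0) with hzdef
  have hz_hi : ∀ k : ℕ, ℓ ≤ k → z k = 0 := by
    intro k hk
    rcases eq_or_lt_of_le hk with he | hlt
    · simp only [hzdef]
      rw [← he]
      rw [if_neg (lt_irrefl ℓ), if_pos (by omega : 1 ≤ ℓ ∧ ℓ < ℓ+1), Nat.sub_self]
      have hmul : s * extv SA 0 = extv SB ℓ := by
        rw [hsdef]
        field_simp
      linarith
    · simp only [hzdef]
      rw [hsbhi k (by omega), if_neg (by omega), if_neg (by omega)]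
      ring
  have hsum_rr : ∑ k ∈ Finset.range (b+1), (if k < ℓ then extv SA (ℓ-1-k) else 0) = 1 := by
    rw [← Finset.sum_subset
      (show Finset.range ℓ ⊆ Finset.range (b+1) by
        intro x hx; simp only [Finset.mem_range] at *; omega)
      (fun x _ hx => by rw [if_neg (by simpa using hx)])]
    rw [Finset.sum_congr rfl (fun k hk => if_pos (Finset.mem_range.1 hk))]
    rw [Finset.sum_range_reflect (fun k => extv SA k) ℓ]
    exact hsa_sum
  have hsum_rr' : ∑ k ∈ Finset.range (b+1),
      (if 1 ≤ k ∧ k < ℓ+1 then extv SA (ℓ-k) else 0) = 1 := by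
    rw [← Finset.sum_subset
      (show Finset.range (ℓ+1) ⊆ Finset.range (b+1) by
        intro x hx; simp only [Finset.mem_range] at *; omega)
      (fun x _ hx => by rw [if_neg (by simp only [Finset.mem_range] at hx; omega)])]
    rw [Finset.sum_range_succ' (fun k => if 1 ≤ k ∧ k < ℓ+1 then extv SA (ℓ-k) else 0) ℓ]
    rw [if_neg (by omega), add_zero]
    have hcong : ∀ k ∈ Finset.range ℓ,
        (if 1 ≤ k+1 ∧ k+1 < ℓ+1 then extv SA (ℓ-(k+1)) else 0) = extv SA (ℓ-1-k) := by
      intro k hk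
      have hkl := Finset.mem_range.1 hk
      rw [if_pos (by omega : 1 ≤ k+1 ∧ k+1 < ℓ+1)]
      congr 1
      omega
    rw [Finset.sum_congr rfl hcong]
    rw [Finset.sum_range_reflect (fun k => extv SA k) ℓ]
    exact hsa_sum
  have hz_sum : ∑ k ∈ Finset.range (b+1), z k = 0 := by
    simp only [hzdef]
    rw [Finset.sum_sub_distrib, Finset.sum_sub_distrib, ← Finset.mul_sum, ← Finset.mul_sum]
    rw [hsb_sum, hsum_rr, hsum_rr']
    ring
  have hGrr : ∀ j : ℤ, ∑ k ∈ Finset.range (b+1),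
      (if k < ℓ then extv SA (ℓ-1-k) else 0) * α (j - ↑k) = Gv α R j := by
    intro j
    rw [hGv_R j]
    rw [← Finset.sum_subset
      (show Finset.range ℓ ⊆ Finset.range (b+1) by
        intro x hx; simp only [Finset.mem_range] at *; omega)
      (fun x _ hx => by rw [if_neg (by simpa using hx), zero_mul])]
    exact Finset.sum_congr rfl fun k hk => by rw [if_pos (Finset.mem_range.1 hk)]
  have hGrr' : ∀ j : ℤ, ∑ k ∈ Finset.range (b+1),
      (if 1 ≤ k ∧ k < ℓ+1 then extv SA (ℓ-k) else 0) * α (j - ↑k) = Gv α R (j-1) := by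
    intro j
    rw [hGv_R (j-1)]
    rw [← Finset.sum_subset
      (show Finset.range (ℓ+1) ⊆ Finset.range (b+1) by
        intro x hx; simp only [Finset.mem_range] at *; omega)
      (fun x _ hx => by
        rw [if_neg (by simp only [Finset.mem_range] at hx; omega), zero_mul])]
    rw [Finset.sum_range_succ'
      (fun k => (if 1 ≤ k ∧ k < ℓ+1 then extv SA (ℓ-k) else 0) * α (j - ↑k)) ℓ]
    rw [if_neg (by omega), zero_mul, add_zero]
    refine Finset.sum_congr rfl fun k hk => ?_
    have hkl := Finset.mem_range.1 hk
    rw [if_pos (by omega : 1 ≤ k+1 ∧ k+1 < ℓ+1)]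
    have e1 : ℓ-(k+1) = ℓ-1-k := by omega
    have e2 : j - ↑(k+1) = j - 1 - ↑k := by omega
    rw [e1, e2]
  have hGRm1 : Gv α R (-1) = Fv α SA ↑ℓ := by
    rw [hGv_R' (-1), hFv_low ↑ℓ]
    refine Finset.sum_congr rfl fun k hk => ?_
    have e : (-1:ℤ) - ↑ℓ + 1 + ↑k = ↑k - ↑ℓ := by ring
    rw [e]
  have hGz : ∀ j : ℕ, j < ℓ → ∑ k ∈ Finset.range (b+1), z k * α (↑j - ↑k) = 0 := by
    intro j hj
    have hexp : ∑ k ∈ Finset.range (b+1), z k * α (↑j - ↑k)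
        = Gv α SB ↑j - (1-s) * Gv α R ↑j - s * Gv α R (↑j - 1) := by
      rw [← hGrr ↑j, ← hGrr' ↑j]
      have hGSBexp : Gv α SB (↑j:ℤ) = ∑ k ∈ Finset.range (b+1), extv SB k * α (↑j - ↑k) := rfl
      rw [hGSBexp, Finset.mul_sum, Finset.mul_sum,
        ← Finset.sum_sub_distrib, ← Finset.sum_sub_distrib]
      refine Finset.sum_congr rfl fun k _ => ?_
      simp only [hzdef]
      ring
    rw [hexp]
    rcases Nat.eq_zero_or_pos j with hj0 | hjpos
    · subst hj0
      have h1 : Gv α SB ↑(0:ℕ) = v := hGSBeq 0 (by omega)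
      have h2 : Gv α R ↑(0:ℕ) = v := hGReqv 0 (by omega)
      have h3 : ((0:ℕ):ℤ) - 1 = -1 := by norm_num
      rw [h1, h2, h3, hGRm1]
      by_cases hsb : extv SB ℓ = 0
      · have hs0 : s = 0 := by rw [hsdef, hsb, zero_div]
        rw [hs0]
        ring
      · have hFl : Fv α SA ↑ℓ = v := hSBF ℓ (by omega) hsb
        rw [hFl]
        ring
    · have h1 : Gv α SB ↑j = v := hGSBeq j hj
      have h2 : Gv α R ↑j = v := hGReqv j hj
      have h3 : Gv α R (↑j - 1) = v := by
        have h := hGReqv (j-1) (by omega)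
        have e : ((j-1:ℕ):ℤ) = ↑j - 1 := by omega
        rwa [e] at h
      rw [h1, h2, h3]
      ring
  -- the reversed difference vector
  set y : ℕ → ℝ := fun j => if j < ℓ then z (ℓ-1-j) else 0 with hydef
  have hy_hi : ∀ j : ℕ, ℓ ≤ j → y j = 0 := by
    intro j hj
    simp only [hydef]
    rw [if_neg (by omega)]
  have hy_sum : ∑ j ∈ Finset.range (a+1), y j = 0 := by
    have h1 : ∑ j ∈ Finset.range (a+1), y j = ∑ j ∈ Finset.range ℓ, z (ℓ-1-j) := by
      rw [← Finset.sum_subset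
        (show Finset.range ℓ ⊆ Finset.range (a+1) by
          intro x hx; simp only [Finset.mem_range] at *; omega)
        (fun x _ hx => hy_hi x (by simpa using hx))]
      refine Finset.sum_congr rfl fun j hj => ?_
      simp only [hydef]
      rw [if_pos (Finset.mem_range.1 hj)]
    rw [h1, Finset.sum_range_reflect (fun j => z j) ℓ]
    rw [Finset.sum_subset
      (show Finset.range ℓ ⊆ Finset.range (b+1) by
        intro x hx; simp only [Finset.mem_range] at *; omega)
      (fun x _ hx => hz_hi x (by simpa using hx))]
    exact hz_sum
  set Wy : ℤ → ℝ := fun i => ∑ j ∈ Finset.range (a+1), y j * α (↑j - i) with hWydef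
  have hWy0 : ∀ i : ℕ, i < ℓ → Wy ↑i = 0 := by
    intro i hi
    have h1 : Wy ↑i = ∑ j ∈ Finset.range ℓ, z (ℓ-1-j) * α (↑j - ↑i) := by
      simp only [hWydef]
      rw [← Finset.sum_subset
        (show Finset.range ℓ ⊆ Finset.range (a+1) by
          intro x hx; simp only [Finset.mem_range] at *; omega)
        (fun x _ hx => by rw [hy_hi x (by simpa using hx), zero_mul])]
      refine Finset.sum_congr rfl fun j hj => ?_
      simp only [hydef]
      rw [if_pos (Finset.mem_range.1 hj)]
    have h2 : ∑ j ∈ Finset.range ℓ, z (ℓ-1-j) * α (↑j - ↑i)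
        = ∑ j ∈ Finset.range ℓ, z j * α (↑(ℓ-1-i) - ↑j) := by
      rw [← Finset.sum_range_reflect (fun j => z j * α (↑(ℓ-1-i) - ↑j)) ℓ]
      refine Finset.sum_congr rfl fun j hj => ?_
      have hjl : j < ℓ := Finset.mem_range.1 hj
      have e : (↑j:ℤ) - ↑i = ↑(ℓ-1-i) - ↑(ℓ-1-j) := by omega
      rw [e]
    have h3 : ∑ j ∈ Finset.range ℓ, z j * α (↑(ℓ-1-i) - ↑j)
        = ∑ j ∈ Finset.range (b+1), z j * α (↑(ℓ-1-i) - ↑j) :=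
      Finset.sum_subset
        (show Finset.range ℓ ⊆ Finset.range (b+1) by
          intro x hx; simp only [Finset.mem_range] at *; omega)
        (fun x _ hx => by rw [hz_hi x (by simpa using hx), zero_mul])
    rw [h1, h2, h3]
    exact hGz (ℓ-1-i) (by omega)
  -- the perturbation argument: y must vanish
  have hne1 : (Finset.range ℓ).Nonempty := ⟨0, Finset.mem_range.2 (by omega)⟩
  have hne2 : (Finset.range (b+1)).Nonempty := ⟨0, Finset.mem_range.2 (by omega)⟩
  set δ₁ : ℝ := (Finset.range ℓ).inf' hne1 (fun j => extv SA j / (|y j| + 1)) with hδ₁def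
  set δ₂ : ℝ := (Finset.range (b+1)).inf' hne2
    (fun i => if ℓ+1 ≤ i then (Fv α SA ↑i - v) / (|Wy ↑i| + 1) else 1) with hδ₂def
  have hδ₁pos : 0 < δ₁ := by
    rw [hδ₁def, Finset.lt_inf'_iff]
    intro j hj
    exact div_pos (gapfree j (Finset.mem_range.1 hj)) (by positivity)
  have hδ₂pos : 0 < δ₂ := by
    rw [hδ₂def, Finset.lt_inf'_iff]
    intro i hi
    by_cases h : ℓ+1 ≤ i
    · rw [if_pos h]
      exact div_pos (by linarith [hFgt i h]) (by positivity)
    · rw [if_neg h]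
      norm_num
  set δ : ℝ := min δ₁ δ₂ with hδdef
  have hδpos : 0 < δ := lt_min hδ₁pos hδ₂pos
  set σ : ℝ := if 0 ≤ Wy ↑ℓ then (1:ℝ) else -1 with hσdef
  have habsσ : |σ| = 1 := by
    rw [hσdef]
    by_cases h : 0 ≤ Wy ↑ℓ
    · rw [if_pos h]; norm_num
    · rw [if_neg h]; norm_num
  have hσδne : σ * δ ≠ 0 := by
    have : |σ * δ| = δ := by rw [abs_mul, habsσ, one_mul, abs_of_pos hδpos]
    intro hc
    rw [hc, abs_zero] at this
    linarith
  have habsσδ : |σ * δ| = δ := by rw [abs_mul, habsσ, one_mul, abs_of_pos hδpos]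
  have hεWℓ : 0 ≤ σ * δ * Wy ↑ℓ := by
    rw [hσdef]
    by_cases h : 0 ≤ Wy ↑ℓ
    · rw [if_pos h]
      exact mul_nonneg (mul_nonneg zero_le_one hδpos.le) h
    · rw [if_neg h]
      have : (-1:ℝ) * δ * Wy ↑ℓ = δ * (-(Wy ↑ℓ)) := by ring
      rw [this]
      exact mul_nonneg hδpos.le (by linarith)
  have hbnd1 : ∀ j : ℕ, j < ℓ → |σ * δ * y j| ≤ extv SA j := by
    intro j hj
    have hinf : δ₁ ≤ extv SA j / (|y j| + 1) := by
      rw [hδ₁def]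
      exact Finset.inf'_le _ (Finset.mem_range.2 hj)
    have hpos1 : (0:ℝ) < |y j| + 1 := by positivity
    have h1 : δ * (|y j| + 1) ≤ extv SA j :=
      (le_div_iff₀ hpos1).1 (le_trans (min_le_left _ _) hinf)
    have h2 : |σ * δ * y j| = δ * |y j| := by
      rw [abs_mul, habsσδ]
    rw [h2]
    nlinarith [abs_nonneg (y j), hδpos.le]
  have hbnd2 : ∀ i : ℕ, ℓ+1 ≤ i → i < b+1 → |σ * δ * Wy ↑i| ≤ Fv α SA ↑i - v := by
    intro i hi hib
    · have hinf : δ₂ ≤ (Fv α SA ↑i - v) / (|Wy ↑i| + 1) := by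
        rw [hδ₂def]
        have := Finset.inf'_le (fun i => if ℓ+1 ≤ i then (Fv α SA ↑i - v) / (|Wy ↑i| + 1) else 1)
          (Finset.mem_range.2 hib)
        rwa [if_pos hi] at this
      have hpos1 : (0:ℝ) < |Wy ↑i| + 1 := by positivity
      have h1 : δ * (|Wy ↑i| + 1) ≤ Fv α SA ↑i - v :=
        (le_div_iff₀ hpos1).1 (le_trans (min_le_right _ _) hinf)
      have h2 : |σ * δ * Wy ↑i| = δ * |Wy ↑i| := by
        rw [abs_mul, habsσδ]
      rw [h2]
      nlinarith [abs_nonneg (Wy ↑i), hδpos.le]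
  -- the perturbed strategy for A
  set SA' : Fin (a+1) → ℝ := fun j => SA j + σ * δ * y ↑j with hSA'def
  have hSA'ext : ∀ j : ℕ, extv SA' j = extv SA j + σ * δ * y j := by
    intro j
    by_cases hja : j < a+1
    · unfold extv
      rw [dif_pos hja, dif_pos hja]
    · unfold extv
      rw [dif_neg hja, dif_neg hja, hy_hi j (by omega), mul_zero, add_zero]
  have hFv' : ∀ i : ℤ, Fv α SA' i = Fv α SA i + σ * δ * Wy i := by
    intro i
    unfold Fv
    simp only [hWydef]
    rw [Finset.mul_sum, ← Finset.sum_add_distrib]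
    refine Finset.sum_congr rfl fun j _ => ?_
    rw [hSA'ext j]
    ring
  have hmulVec' : ∀ i : Fin (b+1), M.mulVec SA' i = Fv α SA ↑i + σ * δ * Wy ↑i := by
    intro i
    rw [mulVec_eq hM, hFv']
  have hSA'prob : IsProbVec SA' := by
    constructor
    · intro j
      rcases lt_or_ge ((j:ℕ)) ℓ with hjl | hjl
      · have h1 := hbnd1 (j:ℕ) hjl
        have h2 := neg_abs_le (σ * δ * y ↑j)
        have h3 : extv SA ↑j = SA j := extv_apply SA j
        simp only [hSA'def]
        linarith
      · simp only [hSA'def]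
        rw [hy_hi _ hjl, mul_zero, add_zero]
        exact hpSA.1 j
    · simp only [hSA'def]
      rw [Finset.sum_add_distrib, hpSA.2, ← Finset.mul_sum]
      have he : ∑ j : Fin (a+1), y ↑j = ∑ j ∈ Finset.range (a+1), y j :=
        Fin.sum_univ_eq_sum_range (fun j => y j) (a+1)
      rw [he, hy_sum, mul_zero, add_zero]
  have hval' : payoff M SA' R = v := by
    unfold payoff
    have hpt : ∀ i : Fin (b+1), R i * (M.mulVec SA') i = R i * v := by
      intro i
      by_cases hR0 : R i = 0
      · rw [hR0, zero_mul, zero_mul]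
      · have hiℓ : (i:ℕ) < ℓ := by
          by_contra hcon
          apply hR0
          simp only [hRdef]
          rw [dif_neg hcon]
        rw [hmulVec' i, hWy0 (i:ℕ) hiℓ, hFeqv (i:ℕ) hiℓ, mul_zero, add_zero]
    rw [Finset.sum_congr rfl (fun i _ => hpt i), ← Finset.sum_mul, hpR.2, one_mul]
  have hNash' : IsNash M SA' R := by
    refine ⟨hSA'prob, hpR, ?_, ?_⟩
    · intro T hT
      rw [hval', payRight hM T R]
      have hTnn : ∀ j : ℕ, 0 ≤ extv T j := by
        intro j
        unfold extv
        split
        · exact hT.1 _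
        · exact le_refl 0
      have hTsum : ∑ j ∈ Finset.range (a+1), extv T j = 1 := by
        rw [← Fin.sum_univ_eq_sum_range (fun j => extv T j) (a+1), ← hT.2]
        exact Finset.sum_congr rfl fun j _ => extv_apply T j
      calc ∑ j ∈ Finset.range (a+1), extv T j * Gv α R ↑j
          ≤ ∑ j ∈ Finset.range (a+1), extv T j * v :=
            Finset.sum_le_sum (fun j hj =>
              mul_le_mul_of_nonneg_left (hGleF j (Finset.mem_range.1 hj)) (hTnn j))
        _ = v := by rw [← Finset.sum_mul, hTsum, one_mul]
    · intro T hT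
      rw [hval']
      unfold payoff
      have hvle : ∀ i : Fin (b+1), v ≤ M.mulVec SA' i := by
        intro i
        rw [hmulVec' i]
        rcases lt_trichotomy ((i:ℕ)) ℓ with hlt | heq | hgt
        · rw [hFeqv _ hlt, hWy0 _ hlt, mul_zero, add_zero]
        · rw [heq]
          have h1 : v ≤ Fv α SA ↑ℓ := hFge ℓ (by omega)
          linarith [hεWℓ]
        · have h1 := hbnd2 (i:ℕ) (by omega) i.isLt
          have h2 := neg_abs_le (σ * δ * Wy ↑(i:ℕ))
          linarith
      calc v = ∑ i : Fin (b+1), T i * v := by rw [← Finset.sum_mul, hT.2, one_mul]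
        _ ≤ ∑ i : Fin (b+1), T i * (M.mulVec SA') i :=
            Finset.sum_le_sum (fun i _ => mul_le_mul_of_nonneg_left (hvle i) (hT.1 i))
  have hSA'eq : SA' = SA := huniq SA' R hNash'
  have hy0 : ∀ j : ℕ, y j = 0 := by
    intro j
    rcases lt_or_ge j ℓ with hj | hj
    · have hja : j < a+1 := by omega
      have hcf := congrFun hSA'eq ⟨j, hja⟩
      simp only [hSA'def] at hcf
      have hεy : σ * δ * y ↑(⟨j, hja⟩ : Fin (a+1)) = 0 := by linarith
      rcases mul_eq_zero.1 hεy with hc | hc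
      · exact absurd hc hσδne
      · exact hc
    · exact hy_hi j hj
  have hz0 : ∀ k : ℕ, z k = 0 := by
    intro k
    rcases lt_or_ge k ℓ with hk | hk
    · have h := hy0 (ℓ-1-k)
      simp only [hydef] at h
      rw [if_pos (by omega : ℓ-1-k < ℓ)] at h
      have e : ℓ-1-(ℓ-1-k) = k := by omega
      rwa [e] at h
    · exact hz_hi k hk
  -- conclusion
  refine ⟨1 - s, ?_, by linarith, ?_⟩
  · have h0 := hz0 0
    simp only [hzdef] at h0
    rw [if_pos (by omega : 0 < ℓ), if_neg (by omega), Nat.sub_zero, mul_zero, sub_zero] at h0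
    nlinarith [hsbnn 0, hsatop]
  · intro k
    have hzk := hz0 (↑k : ℕ)
    simp only [hzdef] at hzk
    rw [extv_apply] at hzk
    have e1 : (if h : (k:ℕ) < ℓ then SA ⟨ℓ-1-(k:ℕ), by omega⟩ else 0)
        = (if (k:ℕ) < ℓ then extv SA (ℓ-1-(k:ℕ)) else 0) := by
      by_cases h : (k:ℕ) < ℓ
      · rw [dif_pos h, if_pos h]
        unfold extv
        rw [dif_pos (by omega : ℓ-1-(k:ℕ) < a+1)]
      · rw [dif_neg h, if_neg h]
    have e2 : (if h : 1 ≤ (k:ℕ) ∧ (k:ℕ) < ℓ+1 then SA ⟨ℓ-(k:ℕ), by omega⟩ else 0)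
        = (if 1 ≤ (k:ℕ) ∧ (k:ℕ) < ℓ+1 then extv SA (ℓ-(k:ℕ)) else 0) := by
      by_cases h : 1 ≤ (k:ℕ) ∧ (k:ℕ) < ℓ+1
      · rw [dif_pos h, if_pos h]
        unfold extv
        rw [dif_pos (by omega : ℓ-(k:ℕ) < a+1)]
      · rw [dif_neg h, if_neg h]
    rw [e1, e2]
    linarith
end

section
/- If M_A is a (possibly imprecise) payoff matrix such that the chip-adjusted precise game M_A^x = M_A + xB has an advantaged equilibrium strategy of length ℓ supported on all of 0,…,ℓ−1, then at least one of the ℓ×ℓ matrices M_A(ℓ) and 𝟙 − M_A(ℓ)^T is invertible. -/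
open Matrix

/-- let `M'` be the top-left `ℓ × ℓ` minor `M_A(ℓ)` of a
(possibly imprecise) payoff matrix, and suppose the chip-adjusted precise game
`M' + x B` (with `x > 0`, where consecutive rows of `B` differ by the all-ones
vector) has an advantaged equilibrium strategy `S` of length `ℓ` supported on
all of `0, …, ℓ-1`.  Then at least one of `M_A(ℓ)` and `𝟙 - M_A(ℓ)ᵀ` is
invertible. -/
theorem stmt_14 (ℓ : ℕ) (hℓ : 1 ≤ ℓ)
    (M' B : Matrix (Fin ℓ) (Fin ℓ) ℝ)
    -- consecutive rows of `B` differ by the all-ones vector: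
    (hB : ∀ (i : Fin ℓ) (hi : (i : ℕ) + 1 < ℓ) (j : Fin ℓ),
      B ⟨(i : ℕ) + 1, hi⟩ j = B i j + 1)
    (x : ℝ) (hx : 0 < x)
    -- the adjusted matrices are invertible (precise-game invertibility):
    (hAx : IsUnit (M' + x • B).det)
    (hBx : IsUnit ((Matrix.of fun _ _ => (1 : ℝ)) - M'ᵀ + x • B).det)
    -- `S = S_A^x` is the equilibrium strategy, with full support:
    (S : Fin ℓ → ℝ) (hS : IsProbVec S) (hpos : ∀ k, 0 < S k)
    (v v' : ℝ)
    -- equilibrium (indifference) conditions: `M_A^x(ℓ) S = v 𝟙` and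
    -- `Sᵀ M_B^x(ℓ) = v' 𝟙ᵀ`:
    (hrow : (M' + x • B).mulVec S = fun _ => v)
    (hcol : Matrix.vecMul S ((Matrix.of fun _ _ => (1 : ℝ)) - M'ᵀ + x • B) = fun _ => v')
    -- optimality of `S`: no strategy guarantees strictly more than `v`:
    (hopt : ∀ T : Fin ℓ → ℝ, IsProbVec T → ∃ i, ((M' + x • B).mulVec T) i ≤ v) :
    IsUnit M'.det ∨ IsUnit ((Matrix.of fun _ _ => (1 : ℝ)) - M'ᵀ).det := by
  by_cases hM : IsUnit M'.det
  · exact Or.inl hM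
  right
  have hℓ0 : 0 < ℓ := hℓ
  haveI : Nonempty (Fin ℓ) := ⟨⟨0, hℓ0⟩⟩
  set G : Matrix (Fin ℓ) (Fin ℓ) ℝ := (Matrix.of fun _ _ => (1 : ℝ)) - M'ᵀ with hGdef
  have hGapp : ∀ k j : Fin ℓ, G k j = 1 - M' j k := by
    intro k j; simp [hGdef, Matrix.sub_apply]
  set b : Fin ℓ → ℝ := fun j => B ⟨0, hℓ0⟩ j with hb
  have hBentry : ∀ (i j : Fin ℓ), B i j = b j + (i : ℕ) := by
    intro i j
    obtain ⟨n, hn⟩ := i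
    induction n with
    | zero => simp [hb]
    | succ k ih =>
      have hk : k < ℓ := Nat.lt_of_succ_lt hn
      have h1 := hB ⟨k, hk⟩ hn j
      simp only [Fin.val_mk] at h1 ⊢
      rw [h1, ih hk]
      push_cast; ring
  -- null vector of M'
  have hdet0 : M'.det = 0 := by
    by_contra h; exact hM (isUnit_iff_ne_zero.mpr h)
  obtain ⟨w0, hw0ne, hw0⟩ := (Matrix.exists_mulVec_eq_zero_iff).mpr hdet0
  -- the sum of entries of w0 is nonzero
  have hsum : ∑ j, w0 j ≠ 0 := by
    intro hs
    set c : ℝ := ∑ j, b j * w0 j with hc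
    have hBw : B.mulVec w0 = fun _ => c := by
      funext i
      simp only [Matrix.mulVec, dotProduct]
      calc ∑ j, B i j * w0 j = ∑ j, (b j * w0 j + ((i : ℕ) : ℝ) * w0 j) := by
            refine Finset.sum_congr rfl fun j _ => ?_
            rw [hBentry i j]; ring
        _ = c + ((i : ℕ) : ℝ) * ∑ j, w0 j := by
            rw [Finset.sum_add_distrib, ← Finset.mul_sum, hc]
        _ = c := by rw [hs]; ring
    have hmul : (M' + x • B).mulVec w0 = fun _ => x * c := by
      funext i
      rw [Matrix.add_mulVec, Matrix.smul_mulVec, hw0, hBw]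
      simp
    by_cases hc0 : c = 0
    · -- then w0 is a null vector of the invertible M' + xB, contradiction
      have : (M' + x • B).det = 0 := by
        rw [← Matrix.exists_mulVec_eq_zero_iff]
        exact ⟨w0, hw0ne, by rw [hmul, hc0]; funext i; simp⟩
      exact (isUnit_iff_ne_zero.mp hAx) this
    · -- perturb S by a small multiple of w0 to beat v
      set m : ℝ := Finset.univ.inf' Finset.univ_nonempty S with hm
      set Mx : ℝ := Finset.univ.sup' Finset.univ_nonempty (fun i => |c * w0 i|) with hMx
      have hm0 : 0 < m := by
        obtain ⟨i0, _, hi0⟩ := Finset.exists_mem_eq_inf' Finset.univ_nonempty S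
        rw [hm, hi0]; exact hpos i0
      have hMx0 : 0 ≤ Mx := by
        refine le_trans (abs_nonneg (c * w0 (Classical.arbitrary (Fin ℓ)))) ?_
        exact Finset.le_sup' (fun i => |c * w0 i|)
          (Finset.mem_univ (Classical.arbitrary (Fin ℓ)))
      set t : ℝ := m / (Mx + 1) with ht
      have ht0 : 0 < t := div_pos hm0 (by linarith)
      have htM : t * Mx < m := by
        rw [ht, div_mul_eq_mul_div, div_lt_iff₀ (by linarith)]
        nlinarith
      set T : Fin ℓ → ℝ := fun i => S i + (t * c) * w0 i with hT
      have hTprob : IsProbVec T := by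
        constructor
        · intro i
          have h1 : m ≤ S i := Finset.inf'_le _ (Finset.mem_univ i)
          have h2 : |c * w0 i| ≤ Mx := Finset.le_sup' (fun i => |c * w0 i|) (Finset.mem_univ i)
          have h3 : -(t * |c * w0 i|) ≤ t * (c * w0 i) := by
            have := neg_abs_le (c * w0 i)
            nlinarith
          rw [hT]
          simp only
          nlinarith
        · rw [hT]
          simp only
          rw [Finset.sum_add_distrib, ← Finset.mul_sum, hs, hS.2]
          ring
      obtain ⟨i, hi⟩ := hopt T hTprob
      have hTv : (M' + x • B).mulVec T i = v + t * c * (x * c) := by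
        have hTw : T = S + (t * c) • w0 := by
          funext i
          simp [hT, Pi.add_apply, Pi.smul_apply, smul_eq_mul]
        rw [hTw, Matrix.mulVec_add, Matrix.mulVec_smul, hrow, hmul]
        simp [smul_eq_mul]
      rw [hTv] at hi
      have hcc : 0 < c * c := mul_self_pos.mpr hc0
      have hkey : t * c * (x * c) = (t * x) * (c * c) := by ring
      nlinarith [mul_pos (mul_pos ht0 hx) hcc]
  -- normalize: w has entry sum 1 and M' w = 0
  set w : Fin ℓ → ℝ := (∑ j, w0 j)⁻¹ • w0 with hw
  have hwnull : M'.mulVec w = 0 := by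
    rw [hw, Matrix.mulVec_smul, hw0, smul_zero]
  have hwsum : ∑ j, w j = 1 := by
    rw [hw]
    simp only [Pi.smul_apply, smul_eq_mul]
    rw [← Finset.mul_sum, inv_mul_cancel₀ hsum]
  -- w is a left inverse row for G giving the all-ones row
  have hwG : ∀ j, ∑ k, w k * G k j = 1 := by
    intro j
    have h1 : ∑ k, w k * G k j = (∑ k, w k) - ∑ k, M' j k * w k := by
      rw [← Finset.sum_sub_distrib]
      refine Finset.sum_congr rfl fun k _ => ?_
      rw [hGapp]; ring
    have h2 : ∑ k, M' j k * w k = 0 := by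
      have h3 := congrFun hwnull j
      simpa [Matrix.mulVec, dotProduct] using h3
    rw [h1, h2, hwsum]; ring
  -- the row S gives b (up to affine correction) through G
  have hSG : ∀ j, ∑ k, S k * G k j
      = v' - x * (b j + ∑ i, S i * ((i : ℕ) : ℝ)) := by
    intro j
    have h0 := congrFun hcol j
    simp only [Matrix.vecMul, dotProduct, Matrix.add_apply, Matrix.smul_apply,
      smul_eq_mul] at h0
    have h1 : ∑ i, S i * (G i j + x * B i j)
        = (∑ i, S i * G i j) + (x * b j) * (∑ i, S i)
          + x * (∑ i, S i * ((i : ℕ) : ℝ)) := by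
      rw [Finset.mul_sum, Finset.mul_sum, ← Finset.sum_add_distrib,
        ← Finset.sum_add_distrib]
      refine Finset.sum_congr rfl fun i _ => ?_
      rw [hBentry i j]; ring
    rw [h1, hS.2] at h0
    linear_combination h0
  -- correction row giving exactly b through G
  have hsplit : ∀ (j : Fin ℓ) (a c2 : ℝ), ∑ k, (a * w k - c2 * S k) * G k j
      = a * (∑ k, w k * G k j) - c2 * (∑ k, S k * G k j) := by
    intro j a c2
    rw [Finset.mul_sum, Finset.mul_sum, ← Finset.sum_sub_distrib]
    exact Finset.sum_congr rfl fun k _ => by ring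
  have hcvG : ∀ j, ∑ k,
      (((v' - x * (∑ i, S i * ((i : ℕ) : ℝ))) / x) * w k - (1 / x) * S k) * G k j
      = b j := by
    intro j
    rw [hsplit j, hwG j, hSG j]
    field_simp
    ring
  -- the matrix R with (1 + R) G = G + x B
  set R : Matrix (Fin ℓ) (Fin ℓ) ℝ :=
    Matrix.of (fun i k => x * (((i : ℕ) : ℝ) * w k +
      (((v' - x * (∑ i, S i * ((i : ℕ) : ℝ))) / x) * w k - (1 / x) * S k))) with hR
  have key : G + x • B = (1 + R) * G := by
    rw [Matrix.add_mul, Matrix.one_mul]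
    congr 1
    ext i j
    simp only [Matrix.smul_apply, Matrix.mul_apply, hR, Matrix.of_apply, smul_eq_mul]
    refine Eq.symm ?_
    calc ∑ k, x * (((i : ℕ) : ℝ) * w k +
            (((v' - x * (∑ i, S i * ((i : ℕ) : ℝ))) / x) * w k - (1 / x) * S k)) * G k j
        = ∑ k, ((x * ((i : ℕ) : ℝ)) * (w k * G k j)
            + x * ((((v' - x * (∑ i, S i * ((i : ℕ) : ℝ))) / x) * w k
              - (1 / x) * S k) * G k j)) := by
          refine Finset.sum_congr rfl fun k _ => ?_; ring
      _ = (x * ((i : ℕ) : ℝ)) * (∑ k, w k * G k j)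
            + x * ∑ k, (((v' - x * (∑ i, S i * ((i : ℕ) : ℝ))) / x) * w k
              - (1 / x) * S k) * G k j := by
          rw [Finset.sum_add_distrib, ← Finset.mul_sum, ← Finset.mul_sum]
      _ = x * B i j := by rw [hwG j, hcvG j, hBentry i j]; ring
  have hBx' : IsUnit ((1 + R) * G).det := by rwa [← key]
  rw [Matrix.det_mul] at hBx'
  exact (IsUnit.mul_iff.mp hBx').2
end

section
/- Linear parametrization of adjusted strategies: suppose M is an invertible n×n matrix and for each x in an interval (a,b) the vector S^x satisfies (M + xB)S^x = c_x𝟙 for scalars c_x, where consecutive rows of B differ by the all-ones vector, and each S^x has entries summing to 1. Then there exist fixed vectors S and T such that S^x = S + xT for all x ∈ (a,b). -/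
/-- linear parametrization of adjusted strategies: let `M` be an
invertible `n × n` matrix with `𝟙ᵀ M⁻¹ 𝟙 ≠ 0`, and let `B` be a matrix whose
consecutive rows differ by the all-ones vector.  If for each `x ∈ (a, b)` the
vector `S^x` has entries summing to 1 and satisfies `(M + x B) S^x = c_x 𝟙`
for some scalar `c_x`, then there are fixed vectors `S, T` with
`S^x = S + x T` for all `x ∈ (a, b)`. -/
theorem stmt_15 (n : ℕ) (M B : Matrix (Fin n) (Fin n) ℝ)
    (hM : IsUnit M.det)
    (hden : (∑ i, (M⁻¹.mulVec (fun _ => (1 : ℝ))) i) ≠ 0)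
    (hB : ∀ (i : Fin n) (hi : (i : ℕ) + 1 < n) (j : Fin n),
      B ⟨(i : ℕ) + 1, hi⟩ j = B i j + 1)
    (a b : ℝ) (S : ℝ → (Fin n → ℝ)) (c : ℝ → ℝ)
    (hrow : ∀ x ∈ Set.Ioo a b, (M + x • B).mulVec (S x) = fun _ => c x)
    (hsum : ∀ x ∈ Set.Ioo a b, ∑ i, S x i = 1) :
    ∃ S₀ T : Fin n → ℝ, ∀ x ∈ Set.Ioo a b, S x = fun i => S₀ i + x * T i := by
  classical
  obtain rfl | hn := Nat.eq_zero_or_pos n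
  · exfalso; exact hden (by simp)
  set ones : Fin n → ℝ := fun _ => (1 : ℝ) with hones
  set w : Fin n → ℝ := fun i => (i : ℝ) with hw
  set u := M⁻¹.mulVec ones with hu
  set v := M⁻¹.mulVec w with hv
  set D := ∑ i, u i with hD
  have hD0 : D ≠ 0 := hden
  set r := ∑ i, v i with hr
  refine ⟨fun i => D⁻¹ * u i, fun i => (r / D) * u i - v i, ?_⟩
  intro x hx
  have hMM : M⁻¹ * M = 1 := Matrix.nonsing_inv_mul M hM
  -- staircase structure of B.mulVec (S x)
  set β := B.mulVec (S x) ⟨0, hn⟩ with hβ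
  have key : ∀ k (hk : k < n), B.mulVec (S x) ⟨k, hk⟩ = β + k := by
    intro k
    induction k with
    | zero => intro hk; simp [hβ]
    | succ m ih =>
      intro hk
      have hm : m < n := Nat.lt_of_succ_lt hk
      have hstep : B.mulVec (S x) ⟨m + 1, hk⟩ = B.mulVec (S x) ⟨m, hm⟩ + 1 := by
        simp only [Matrix.mulVec, dotProduct]
        have : ∀ j ∈ Finset.univ, B ⟨m + 1, hk⟩ j * S x j
            = B ⟨m, hm⟩ j * S x j + S x j := by
          intro j _
          rw [hB ⟨m, hm⟩ hk j]; ring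
        rw [Finset.sum_congr rfl this, Finset.sum_add_distrib, hsum x hx]
      rw [hstep, ih hm]
      push_cast
      ring
  have hBv : B.mulVec (S x) = fun i : Fin n => β + (i : ℝ) := by
    funext i
    have := key i.val i.isLt
    simpa using this
  -- M.mulVec (S x)
  have hM1 : M.mulVec (S x) = fun i => (c x - x * β) * ones i - x * w i := by
    have h := hrow x hx
    rw [Matrix.add_mulVec, Matrix.smul_mulVec, hBv] at h
    funext i
    have hi := congrFun h i
    simp only [Pi.add_apply, Pi.smul_apply, smul_eq_mul] at hi
    simp only [hones, hw]
    linarith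
  have hSx : ∀ i, S x i = (c x - x * β) * u i - x * v i := by
    intro i
    have hid : M⁻¹.mulVec (M.mulVec (S x)) = S x := by
      rw [Matrix.mulVec_mulVec, hMM, Matrix.one_mulVec]
    have := congrFun hid i
    rw [hM1] at this
    rw [← this]
    simp only [Matrix.mulVec, dotProduct, hu, hv]
    rw [Finset.mul_sum, Finset.mul_sum, ← Finset.sum_sub_distrib]
    apply Finset.sum_congr rfl
    intro j _
    ring
  -- sum condition
  have hsum1 : (c x - x * β) * D - x * r = 1 := by
    have h1 := hsum x hx
    rw [Finset.sum_congr rfl (fun i _ => hSx i)] at h1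
    rw [Finset.sum_sub_distrib, ← Finset.mul_sum, ← Finset.mul_sum] at h1
    rw [← hD, ← hr] at h1
    linarith
  have hc : c x - x * β = (1 + x * r) / D := by
    field_simp
    linarith
  funext i
  rw [hSx i, hc]
  field_simp
  ring
end

section
/- Convergence of optimal strategies: if there exist ℓ₀ and x₁ > 0 such that for all 0 < x < x₁ the advantaged player's unique equilibrium strategy S_A^x in the chip-adjusted game has length ℓ₀, and the top-left ℓ₀×ℓ₀ minor M_A(ℓ₀) of the unadjusted payoff matrix is invertible, then lim_{x→0⁺} S_A^x exists and is an equilibrium strategy for the unadjusted game M_A. -/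
open Filter Topology

/-- The minimum entry of a vector indexed by `Fin (n+1)`. -/
noncomputable def minEntry {n : ℕ} (v : Fin (n + 1) → ℝ) : ℝ :=
  Finset.univ.inf' ⟨0, Finset.mem_univ 0⟩ v

/-- convergence of optimal strategies: suppose that for all
`0 < x < x₁` the advantaged player's unique equilibrium strategy `S_A^x` in the
chip-adjusted game `M_A + x B` has length `ℓ₀` (with full support there, so it
is given by the strategy formula on the `ℓ₀ × ℓ₀` minor), that the adjusted
values converge to the value `v_A` of the unadjusted game, and that the
top-left `ℓ₀ × ℓ₀` minor of `M_A` is invertible.  Then `lim_{x→0⁺} S_A^x`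
exists, is a probability vector, and is an equilibrium (optimal) strategy for
the unadjusted game `M_A`. -/
theorem stmt_16 (a b : ℕ) (M B : Matrix (Fin (b + 1)) (Fin (a + 1)) ℝ)
    (ℓ₀ : ℕ) (hℓ1 : 1 ≤ ℓ₀) (hℓa : ℓ₀ ≤ a + 1) (hℓb : ℓ₀ ≤ b + 1)
    -- the top-left `ℓ₀ × ℓ₀` minor of the unadjusted matrix is invertible:
    (hinv : IsUnit (Matrix.of fun (i : Fin ℓ₀) (j : Fin ℓ₀) =>
      M ⟨(i : ℕ), by omega⟩ ⟨(j : ℕ), by omega⟩).det)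
    (x₁ : ℝ) (hx₁ : 0 < x₁)
    (S : ℝ → (Fin (a + 1) → ℝ))
    -- each `S_A^x` is a probability vector of length `ℓ₀`:
    (hprob : ∀ x ∈ Set.Ioo (0 : ℝ) x₁, IsProbVec (S x))
    (hsupp : ∀ x ∈ Set.Ioo (0 : ℝ) x₁, ∀ m : Fin (a + 1), ℓ₀ ≤ (m : ℕ) → S x m = 0)
    -- the strategy formula (may be assumed) on the minor of `M_A + x B`:
    (hformula : ∀ x ∈ Set.Ioo (0 : ℝ) x₁,
      (fun j : Fin ℓ₀ => S x ⟨(j : ℕ), by omega⟩) =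
        fun j : Fin ℓ₀ =>
          ((Matrix.of fun (i : Fin ℓ₀) (j' : Fin ℓ₀) =>
              (M + x • B) ⟨(i : ℕ), by omega⟩ ⟨(j' : ℕ), by omega⟩)⁻¹.mulVec
            (fun _ => (1 : ℝ))) j /
          ∑ i, ((Matrix.of fun (i' : Fin ℓ₀) (j' : Fin ℓ₀) =>
              (M + x • B) ⟨(i' : ℕ), by omega⟩ ⟨(j' : ℕ), by omega⟩)⁻¹.mulVec
            (fun _ => (1 : ℝ))) i)
    (vA : ℝ)
    -- convergence of the adjusted values to `v_A` (may be assumed):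
    (hval : Tendsto (fun x : ℝ => minEntry ((M + x • B).mulVec (S x)))
      (𝓝[>] (0 : ℝ)) (𝓝 vA))
    -- `v_A` is the value of the unadjusted game (no strategy guarantees more):
    (hub : ∀ S', IsProbVec S' → minEntry (M.mulVec S') ≤ vA) :
    ∃ S₀ : Fin (a + 1) → ℝ,
      Tendsto S (𝓝[>] (0 : ℝ)) (𝓝 S₀) ∧ IsProbVec S₀ ∧
        minEntry (M.mulVec S₀) = vA := by
  have hℓ0 : 0 < ℓ₀ := hℓ1
  set A : ℝ → Matrix (Fin ℓ₀) (Fin ℓ₀) ℝ := fun x =>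
    Matrix.of fun (i : Fin ℓ₀) (j : Fin ℓ₀) =>
      (M + x • B) ⟨(i : ℕ), by omega⟩ ⟨(j : ℕ), by omega⟩ with hAdef
  set N : ℝ → Fin ℓ₀ → ℝ := fun x => (A x)⁻¹.mulVec (fun _ => (1 : ℝ)) with hNdef
  set D : ℝ → ℝ := fun x => ∑ i, N x i with hDdef
  have hform : ∀ x ∈ Set.Ioo (0 : ℝ) x₁, ∀ j : Fin ℓ₀,
      S x ⟨(j : ℕ), by omega⟩ = N x j / D x := by
    intro x hx j
    exact congrFun (hformula x hx) j
  have hA0 : A 0 = Matrix.of fun (i : Fin ℓ₀) (j : Fin ℓ₀) =>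
      M ⟨(i : ℕ), by omega⟩ ⟨(j : ℕ), by omega⟩ := by
    ext i j
    simp [hAdef]
  have hdet0 : (A 0).det ≠ 0 := by
    rw [hA0]
    exact hinv.ne_zero
  have hAc : Continuous A := by
    apply continuous_matrix
    intro i j
    simp only [hAdef, Matrix.of_apply, Matrix.add_apply, Matrix.smul_apply, smul_eq_mul]
    fun_prop
  have hinvc : ContinuousAt (fun x => (A x)⁻¹) 0 := by
    have h1 : ContinuousAt Ring.inverse (A 0).det := by
      rw [Ring.inverse_eq_inv']
      exact continuousAt_inv₀ hdet0
    exact (continuousAt_matrix_inv (A 0) h1).comp hAc.continuousAt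
  have hNj : ∀ j : Fin ℓ₀, Tendsto (fun x => N x j) (𝓝 (0 : ℝ)) (𝓝 (N 0 j)) := by
    intro j
    have hjk : ∀ k, Tendsto (fun x => (A x)⁻¹ j k) (𝓝 (0:ℝ)) (𝓝 ((A 0)⁻¹ j k)) := by
      intro k
      have h2 : Tendsto (fun m : Matrix (Fin ℓ₀) (Fin ℓ₀) ℝ => m j k) (𝓝 (A 0)⁻¹)
          (𝓝 ((A 0)⁻¹ j k)) := (((continuous_apply k).comp (continuous_apply j)).tendsto _)
      exact h2.comp hinvc
    simp only [hNdef, Matrix.mulVec, dotProduct]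
    exact tendsto_finset_sum _ fun k _ => (hjk k).mul tendsto_const_nhds
  have hDt : Tendsto D (𝓝 (0 : ℝ)) (𝓝 (D 0)) :=
    tendsto_finset_sum _ fun i _ => hNj i
  have hIoo : Set.Ioo (0 : ℝ) x₁ ∈ 𝓝[>] (0 : ℝ) :=
    Ioo_mem_nhdsGT_of_mem ⟨le_refl 0, hx₁⟩
  have hsum : ∀ x ∈ Set.Ioo (0 : ℝ) x₁,
      ∑ j : Fin ℓ₀, S x (Fin.castLE hℓa j) = 1 := by
    intro x hx
    have h1 := (hprob x hx).2
    rw [← h1]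
    have hce : ∀ j : Fin ℓ₀, Fin.castLE hℓa j = Fin.castLEEmb hℓa j := fun _ => rfl
    simp only [hce]
    rw [← Finset.sum_map Finset.univ (Fin.castLEEmb hℓa) (S x)]
    refine Finset.sum_subset (Finset.subset_univ _) ?_
    intro i _ hi
    refine hsupp x hx i ?_
    by_contra hlt
    push_neg at hlt
    exact hi (Finset.mem_map.2 ⟨⟨(i : ℕ), hlt⟩, Finset.mem_univ _, by
      simp [Fin.castLEEmb, Fin.ext_iff]⟩)
  have hDx : ∀ x ∈ Set.Ioo (0 : ℝ) x₁, D x ≠ 0 := by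
    intro x hx h0
    have hz : ∑ j : Fin ℓ₀, S x (Fin.castLE hℓa j) = 0 := by
      refine Finset.sum_eq_zero fun j _ => ?_
      have hf := hform x hx j
      rw [h0, div_zero] at hf
      exact hf
    rw [hsum x hx] at hz
    norm_num at hz
  have hSle : ∀ x ∈ Set.Ioo (0 : ℝ) x₁, ∀ m, S x m ≤ 1 := by
    intro x hx m
    have h1 := (hprob x hx).2
    calc S x m ≤ ∑ i, S x i :=
          Finset.single_le_sum (fun i _ => (hprob x hx).1 i) (Finset.mem_univ m)
      _ = 1 := h1
  have hD0 : D 0 ≠ 0 := by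
    intro h0
    have hN0 : ∀ j : Fin ℓ₀, N 0 j = 0 := by
      intro j
      have habs : ∀ᶠ x in 𝓝[>] (0 : ℝ), |N x j| ≤ |D x| := by
        filter_upwards [hIoo] with x hx
        have hf := hform x hx j
        have hNe : N x j = S x ⟨(j : ℕ), by omega⟩ * D x := by
          rw [hf]
          exact (div_mul_cancel₀ _ (hDx x hx)).symm
        rw [hNe, abs_mul]
        have h0le : (0:ℝ) ≤ S x ⟨(j : ℕ), by omega⟩ := (hprob x hx).1 _
        have h1le : S x ⟨(j : ℕ), by omega⟩ ≤ 1 := hSle x hx _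
        have habs1 : |S x ⟨(j : ℕ), by omega⟩| ≤ 1 := abs_le.mpr ⟨by linarith, h1le⟩
        nlinarith [abs_nonneg (D x), abs_nonneg (S x (⟨(j : ℕ), by omega⟩ : Fin (a+1)))]
      have hNt : Tendsto (fun x => |N x j|) (𝓝[>] (0 : ℝ)) (𝓝 |N 0 j|) :=
        ((hNj j).mono_left nhdsWithin_le_nhds).abs
      have hDt' : Tendsto (fun x => |D x|) (𝓝[>] (0 : ℝ)) (𝓝 (0 : ℝ)) := by
        have h := (hDt.mono_left (nhdsWithin_le_nhds (s := Set.Ioi (0:ℝ)))).abs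
        rwa [h0, abs_zero] at h
      have hle : |N 0 j| ≤ 0 := le_of_tendsto_of_tendsto hNt hDt' habs
      exact abs_eq_zero.mp (le_antisymm hle (abs_nonneg _))
    have hone : (A 0).mulVec (N 0) = fun _ => (1 : ℝ) := by
      rw [hNdef]
      show (A 0).mulVec ((A 0)⁻¹.mulVec fun _ => (1:ℝ)) = _
      rw [Matrix.mulVec_mulVec, Matrix.mul_nonsing_inv _ (isUnit_iff_ne_zero.mpr hdet0),
        Matrix.one_mulVec]
    have hzero : (A 0).mulVec (N 0) = 0 := by
      have : N 0 = 0 := funext hN0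
      rw [this, Matrix.mulVec_zero]
    have := congrFun hone ⟨0, hℓ0⟩
    rw [hzero] at this
    simpa using this
  set S₀ : Fin (a + 1) → ℝ := fun m =>
    if h : (m : ℕ) < ℓ₀ then N 0 ⟨(m : ℕ), h⟩ / D 0 else 0 with hS₀def
  have hcoord : ∀ m : Fin (a + 1), Tendsto (fun x => S x m) (𝓝[>] (0:ℝ)) (𝓝 (S₀ m)) := by
    intro m
    by_cases h : (m : ℕ) < ℓ₀
    · have heq : ∀ᶠ x in 𝓝[>] (0 : ℝ), N x ⟨(m : ℕ), h⟩ / D x = S x m := by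
        filter_upwards [hIoo] with x hx
        have hf := hform x hx ⟨(m : ℕ), h⟩
        rw [← hf]
      have htend : Tendsto (fun x => N x ⟨(m : ℕ), h⟩ / D x) (𝓝[>] (0:ℝ))
          (𝓝 (N 0 ⟨(m : ℕ), h⟩ / D 0)) :=
        (((hNj _).mono_left nhdsWithin_le_nhds).div
          (hDt.mono_left nhdsWithin_le_nhds) hD0)
      have : S₀ m = N 0 ⟨(m : ℕ), h⟩ / D 0 := by simp [hS₀def, h]
      rw [this]
      exact htend.congr' heq
    · have heq : ∀ᶠ x in 𝓝[>] (0 : ℝ), (0 : ℝ) = S x m := by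
        filter_upwards [hIoo] with x hx
        exact (hsupp x hx m (by omega)).symm
      have : S₀ m = 0 := by simp [hS₀def, h]
      rw [this]
      exact tendsto_const_nhds.congr' heq
  have hStend : Tendsto S (𝓝[>] (0:ℝ)) (𝓝 S₀) := tendsto_pi_nhds.2 hcoord
  refine ⟨S₀, hStend, ⟨?_, ?_⟩, ?_⟩
  · intro i
    refine ge_of_tendsto (hcoord i) ?_
    filter_upwards [hIoo] with x hx
    exact (hprob x hx).1 i
  · have hsumt : Tendsto (fun x => ∑ i, S x i) (𝓝[>] (0:ℝ)) (𝓝 (∑ i, S₀ i)) :=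
      tendsto_finset_sum _ fun i _ => hcoord i
    have hone : ∀ᶠ x in 𝓝[>] (0:ℝ), ∑ i, S x i = 1 := by
      filter_upwards [hIoo] with x hx
      exact (hprob x hx).2
    exact tendsto_nhds_unique (hsumt.congr' (by filter_upwards [hone] with x hx; rw [hx]))
      tendsto_const_nhds
  · have hmv : ∀ i : Fin (b + 1),
        Tendsto (fun x => ((M + x • B).mulVec (S x)) i) (𝓝[>] (0:ℝ))
          (𝓝 ((M.mulVec S₀) i)) := by
      intro i
      have hent : ∀ x, ((M + x • B).mulVec (S x)) i = ∑ j, (M i j + x * B i j) * S x j := by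
        intro x
        simp [Matrix.mulVec, dotProduct, Matrix.add_apply, Matrix.smul_apply,
          smul_eq_mul]
      simp only [hent]
      have hgoal : (M.mulVec S₀) i = ∑ j, (M i j + 0 * B i j) * S₀ j := by
        simp [Matrix.mulVec, dotProduct]
      rw [hgoal]
      refine tendsto_finset_sum _ fun j _ => Tendsto.mul ?_ (hcoord j)
      have hc : Continuous fun x : ℝ => M i j + x * B i j := by fun_prop
      exact (hc.tendsto 0).mono_left nhdsWithin_le_nhds
    have hmin : Tendsto (fun x => minEntry ((M + x • B).mulVec (S x))) (𝓝[>] (0:ℝ))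
        (𝓝 (minEntry (M.mulVec S₀))) := by
      unfold minEntry
      exact Filter.Tendsto.finset_inf'_nhds_apply _ fun i _ => hmv i
    exact tendsto_nhds_unique hmin hval
end
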